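/- arXiv:1901.03543 — 15 statements merged into one kernel-verified Lean document; each statement's English description precedes it below -/
import Mathlib

section
/- Assume g_B > 0. For every fixed p ≥ 0 and τ ∈ [0,1), and every γ ≥ 0, the derivative of the function γ' ↦ C(p, τ, γ') at γ is strictly positive if p < τ·K, equal to zero if p = τ·K, and strictly negative if p > τ·K, where K = ζ·(g_A·N_B/g_B − N_A). -/
/-- Shannon capacity with energy harvesting:
`C(p, τ, γ) = ((1 − τ)/2) · log(1 + ((p/(1 − τ) + (τ/(1 − τ))·ζ·(γ·g_A + N_A))·h)/(γ·g_B + N_B))`. -/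
noncomputable def C (h gA gB NA NB ζ p τ γ : ℝ) : ℝ :=
  ((1 - τ) / 2) *
    Real.log (1 + ((p / (1 - τ) + (τ / (1 - τ)) * ζ * (γ * gA + NA)) * h) / (γ * gB + NB))

/-- With `g_B > 0` and `K = ζ·(g_A·N_B/g_B − N_A)`, the derivative of
`γ' ↦ C(p, τ, γ')` at any `γ ≥ 0` is positive if `p < τ·K`, zero if `p = τ·K`,
and negative if `p > τ·K`. -/
theorem capacity_deriv_in_jamming_sign
    (h gA gB NA NB ζ : ℝ)
    (hh : 0 < h) (hgA : 0 ≤ gA) (hgB : 0 ≤ gB)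
    (hNA : 0 < NA) (hNB : 0 < NB) (hζ : 0 < ζ) (hζ1 : ζ ≤ 1)
    (hgB' : 0 < gB)
    (p τ γ : ℝ) (hp : 0 ≤ p) (hτ0 : 0 ≤ τ) (hτ1 : τ < 1) (hγ : 0 ≤ γ) :
    (p < τ * (ζ * (gA * NB / gB - NA)) →
      0 < deriv (fun γ' => C h gA gB NA NB ζ p τ γ') γ) ∧
    (p = τ * (ζ * (gA * NB / gB - NA)) →
      deriv (fun γ' => C h gA gB NA NB ζ p τ γ') γ = 0) ∧
    (p > τ * (ζ * (gA * NB / gB - NA)) →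
      deriv (fun γ' => C h gA gB NA NB ζ p τ γ') γ < 0) := by
  have h1τ : (0:ℝ) < 1 - τ := by linarith
  have hDpos : 0 < γ * gB + NB := add_pos_of_nonneg_of_pos (mul_nonneg hγ hgB) hNB
  have hDne : γ * gB + NB ≠ 0 := ne_of_gt hDpos
  -- numerator and its derivative
  set Nγ : ℝ := (p / (1 - τ) + (τ / (1 - τ)) * ζ * (γ * gA + NA)) * h with hNγ
  set Nd : ℝ := (τ / (1 - τ)) * ζ * gA * h with hNd
  have hu : HasDerivAt
      (fun γ' => (p / (1 - τ) + (τ / (1 - τ)) * ζ * (γ' * gA + NA)) * h) Nd γ := by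
    have h1 : HasDerivAt (fun γ' : ℝ => γ' * gA + NA) gA γ := by
      simpa using ((hasDerivAt_id γ).mul_const gA).add_const NA
    have h2 := ((h1.const_mul ((τ / (1 - τ)) * ζ)).const_add (p / (1 - τ))).mul_const h
    simpa [hNd, mul_assoc] using h2
  have hv : HasDerivAt (fun γ' : ℝ => γ' * gB + NB) gB γ := by
    simpa using ((hasDerivAt_id γ).mul_const gB).add_const NB
  have hq := hu.div hv hDne
  have harg : (0:ℝ) < 1 + Nγ / (γ * gB + NB) := by
    have hNγ0 : 0 ≤ Nγ := by
      apply mul_nonneg _ hh.le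
      have : 0 ≤ (τ / (1 - τ)) * ζ * (γ * gA + NA) := by positivity
      positivity
    have : 0 ≤ Nγ / (γ * gB + NB) := div_nonneg hNγ0 hDpos.le
    linarith
  have hlog := ((hq.const_add 1).log (ne_of_gt harg)).const_mul ((1 - τ) / 2)
  have hderiv : deriv (fun γ' => C h gA gB NA NB ζ p τ γ') γ =
      ((1 - τ) / 2) * ((Nd * (γ * gB + NB) - Nγ * gB) / (γ * gB + NB) ^ 2 /
        (1 + Nγ / (γ * gB + NB))) := by
    have := hlog.deriv
    simpa [C, hNγ] using this
  -- the bracket equals (h*gB/(1-τ)) * (τ*K - p)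
  have hbra : Nd * (γ * gB + NB) - Nγ * gB =
      (h * gB / (1 - τ)) * (τ * (ζ * (gA * NB / gB - NA)) - p) := by
    rw [hNd, hNγ]
    field_simp
    ring
  refine ⟨fun hlt => ?_, fun heq => ?_, fun hgt => ?_⟩
  · have hb : 0 < Nd * (γ * gB + NB) - Nγ * gB := by
      rw [hbra]; apply mul_pos (by positivity); linarith
    rw [hderiv]
    exact mul_pos (by positivity)
      (div_pos (div_pos hb (pow_pos hDpos 2)) harg)
  · have hb : Nd * (γ * gB + NB) - Nγ * gB = 0 := by
      rw [hbra, heq]; ring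
    rw [hderiv, hb]; simp
  · have hb : Nd * (γ * gB + NB) - Nγ * gB < 0 := by
      rw [hbra]; apply mul_neg_of_pos_of_neg (by positivity); linarith
    rw [hderiv]
    exact mul_neg_of_pos_of_neg (by positivity)
      (div_neg_of_neg_of_pos (div_neg_of_neg_of_pos hb (pow_pos hDpos 2)) harg)
end

section
/- Assume g_B > 0 and g_A/N_A > g_B/N_B (equivalently g_A·N_B > g_B·N_A). If the fixed transmit power and harvesting fraction satisfy p ≤ τ·K, then the function γ ↦ C(p, τ, γ) is monotone nondecreasing on [0, ∞), and it is strictly increasing when p < τ·K. -/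
/-- If `g_B > 0`, `g_A·N_B > g_B·N_A`, and `p ≤ τ·K` with
`K = ζ·(g_A·N_B/g_B − N_A)`, then `γ ↦ C(p, τ, γ)` is monotone nondecreasing on `[0, ∞)`,
and strictly increasing when `p < τ·K`. -/
theorem capacity_mono_in_jamming_below_threshold
    (h gA gB NA NB ζ : ℝ)
    (hh : 0 < h) (hgA : 0 ≤ gA) (hgB : 0 ≤ gB)
    (hNA : 0 < NA) (hNB : 0 < NB) (hζ : 0 < ζ) (hζ1 : ζ ≤ 1)
    (hgB' : 0 < gB) (hlink : gA * NB > gB * NA)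
    (p τ : ℝ) (hp : 0 ≤ p) (hτ0 : 0 ≤ τ) (hτ1 : τ < 1)
    (hpth : p ≤ τ * (ζ * (gA * NB / gB - NA))) :
    MonotoneOn (fun γ => C h gA gB NA NB ζ p τ γ) (Set.Ici 0) ∧
    (p < τ * (ζ * (gA * NB / gB - NA)) →
      StrictMonoOn (fun γ => C h gA gB NA NB ζ p τ γ) (Set.Ici 0)) := by
  have h1τ : (0:ℝ) < 1 - τ := by linarith
  have h1τ' : (1 - τ) ≠ 0 := ne_of_gt h1τ
  have hgB0 : gB ≠ 0 := ne_of_gt hgB'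
  have hkey : p * gB ≤ τ * (ζ * (gA * NB - gB * NA)) := by
    have h2 := mul_le_mul_of_nonneg_right hpth hgB'.le
    calc p * gB ≤ τ * (ζ * (gA * NB / gB - NA)) * gB := h2
      _ = τ * (ζ * (gA * NB - gB * NA)) := by field_simp
  -- denominators
  have hden : ∀ x : ℝ, 0 ≤ x → 0 < x * gB + NB := by
    intro x hx; have := mul_nonneg hx hgB; linarith
  -- rewrite of the inner ratio
  have hrx : ∀ x : ℝ, 0 ≤ x →
      ((p / (1 - τ) + (τ / (1 - τ)) * ζ * (x * gA + NA)) * h) / (x * gB + NB)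
        = ((p + τ * ζ * (x * gA + NA)) * h) / ((1 - τ) * (x * gB + NB)) := by
    intro x hx
    have hdx := hden x hx
    field_simp
  -- nonnegativity of the inner ratio
  have hrnn : ∀ x : ℝ, 0 ≤ x →
      0 ≤ ((p / (1 - τ) + (τ / (1 - τ)) * ζ * (x * gA + NA)) * h) / (x * gB + NB) := by
    intro x hx
    apply div_nonneg _ (hden x hx).le
    apply mul_nonneg _ hh.le
    have : 0 ≤ x * gA + NA := by nlinarith [mul_nonneg hx hgA]
    have h1 : 0 ≤ p / (1 - τ) := div_nonneg hp h1τ.le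
    have h2 : 0 ≤ (τ / (1 - τ)) * ζ * (x * gA + NA) :=
      mul_nonneg (mul_nonneg (div_nonneg hτ0 h1τ.le) hζ.le) this
    linarith
  -- monotone comparison of the inner ratio
  have hmono : ∀ x y : ℝ, 0 ≤ x → 0 ≤ y → x ≤ y →
      ((p / (1 - τ) + (τ / (1 - τ)) * ζ * (x * gA + NA)) * h) / (x * gB + NB)
        ≤ ((p / (1 - τ) + (τ / (1 - τ)) * ζ * (y * gA + NA)) * h) / (y * gB + NB) := by
    intro x y hx hy hxy
    rw [hrx x hx, hrx y hy]
    rw [div_le_div_iff₀ (by positivity) (by positivity)]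
    nlinarith [mul_nonneg (mul_nonneg h1τ.le hh.le)
      (mul_nonneg (sub_nonneg.2 hxy) (sub_nonneg.2 hkey))]
  have hsmono : p * gB < τ * (ζ * (gA * NB - gB * NA)) → ∀ x y : ℝ, 0 ≤ x → 0 ≤ y → x < y →
      ((p / (1 - τ) + (τ / (1 - τ)) * ζ * (x * gA + NA)) * h) / (x * gB + NB)
        < ((p / (1 - τ) + (τ / (1 - τ)) * ζ * (y * gA + NA)) * h) / (y * gB + NB) := by
    intro hkey' x y hx hy hxy
    rw [hrx x hx, hrx y hy]
    rw [div_lt_div_iff₀ (by positivity) (by positivity)]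
    nlinarith [mul_pos (mul_pos h1τ hh)
      (mul_pos (sub_pos.2 hxy) (sub_pos.2 hkey'))]
  constructor
  · intro x hx y hy hxy
    simp only [C]
    apply mul_le_mul_of_nonneg_left _ (by positivity)
    apply Real.log_le_log (by nlinarith [hrnn x hx])
    have := hmono x y hx hy hxy
    linarith
  · intro hlt x hx y hy hxy
    have hkey' : p * gB < τ * (ζ * (gA * NB - gB * NA)) := by
      have h2 := mul_lt_mul_of_pos_right hlt hgB'
      calc p * gB < τ * (ζ * (gA * NB / gB - NA)) * gB := h2
        _ = τ * (ζ * (gA * NB - gB * NA)) := by field_simp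
    simp only [C]
    apply mul_lt_mul_of_pos_left _ (by positivity)
    apply Real.log_lt_log (by nlinarith [hrnn x hx])
    have := hsmono hkey' x y hx hy hxy
    linarith
end

section
/- Assume g_B > 0. If the fixed transmit power and harvesting fraction satisfy p > τ·K, where K = ζ·(g_A·N_B/g_B − N_A), then the function γ ↦ C(p, τ, γ) is strictly decreasing on [0, ∞). -/
/-- If `g_B > 0` and `p > τ·K` with `K = ζ·(g_A·N_B/g_B − N_A)`,
then `γ ↦ C(p, τ, γ)` is strictly decreasing on `[0, ∞)`. -/
theorem capacity_strictAnti_in_jamming_above_threshold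
    (h gA gB NA NB ζ : ℝ)
    (hh : 0 < h) (hgA : 0 ≤ gA) (hgB : 0 ≤ gB)
    (hNA : 0 < NA) (hNB : 0 < NB) (hζ : 0 < ζ) (hζ1 : ζ ≤ 1)
    (hgB' : 0 < gB)
    (p τ : ℝ) (hp : 0 ≤ p) (hτ0 : 0 ≤ τ) (hτ1 : τ < 1)
    (hpth : p > τ * (ζ * (gA * NB / gB - NA))) :
    StrictAntiOn (fun γ => C h gA gB NA NB ζ p τ γ) (Set.Ici 0) := by
  intro x hx y hy hxy
  simp only [Set.mem_Ici] at hx hy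
  have hs : 0 < 1 - τ := by linarith
  have hinv : 0 < (1 - τ)⁻¹ := inv_pos.mpr hs
  have hDx : 0 < x * gB + NB := by positivity
  have hDy : 0 < y * gB + NB := by positivity
  have key0 : τ * ζ * (gA * NB - NA * gB) < p * gB := by
    have h1 := mul_lt_mul_of_pos_right hpth hgB'
    have hne : gB ≠ 0 := ne_of_gt hgB'
    calc τ * ζ * (gA * NB - NA * gB) = τ * (ζ * (gA * NB / gB - NA)) * gB := by
          field_simp
      _ < p * gB := h1
  -- nonnegativity of numerators
  have hNumy : 0 ≤ (p / (1 - τ) + (τ / (1 - τ)) * ζ * (y * gA + NA)) * h := by positivity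
  have hNumx : 0 ≤ (p / (1 - τ) + (τ / (1 - τ)) * ζ * (x * gA + NA)) * h := by positivity
  have core : ((p / (1 - τ) + (τ / (1 - τ)) * ζ * (y * gA + NA)) * h) / (y * gB + NB)
      < ((p / (1 - τ) + (τ / (1 - τ)) * ζ * (x * gA + NA)) * h) / (x * gB + NB) := by
    rw [div_lt_div_iff₀ hDy hDx]
    have hxy' : 0 < y - x := by linarith
    have hkey : 0 < h * (1 - τ)⁻¹ * ((y - x) * (p * gB - τ * ζ * (gA * NB - NA * gB))) := by
      apply mul_pos (mul_pos hh hinv)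
      apply mul_pos hxy'
      linarith
    have : p / (1 - τ) = p * (1 - τ)⁻¹ := div_eq_mul_inv _ _
    have h2 : τ / (1 - τ) = τ * (1 - τ)⁻¹ := div_eq_mul_inv _ _
    rw [this, h2]
    nlinarith [hkey]
  have hlog : Real.log (1 + ((p / (1 - τ) + (τ / (1 - τ)) * ζ * (y * gA + NA)) * h) / (y * gB + NB))
      < Real.log (1 + ((p / (1 - τ) + (τ / (1 - τ)) * ζ * (x * gA + NA)) * h) / (x * gB + NB)) := by
    apply Real.log_lt_log
    · have : 0 ≤ ((p / (1 - τ) + (τ / (1 - τ)) * ζ * (y * gA + NA)) * h) / (y * gB + NB) :=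
        div_nonneg hNumy hDy.le
      linarith
    · linarith
  unfold C
  have h2 : 0 < (1 - τ) / 2 := by linarith
  exact mul_lt_mul_of_pos_left hlog h2
end

section
/- Assume g_B > 0 and g_A/N_A ≤ g_B/N_B (equivalently g_A·N_B ≤ g_B·N_A). Then for every fixed p ≥ 0 and τ ∈ [0,1), the function γ ↦ C(p, τ, γ) is monotone nonincreasing on [0, ∞); moreover it is strictly decreasing whenever p > 0. -/
/-- If `g_B > 0` and `g_A·N_B ≤ g_B·N_A`, then for every fixed `p ≥ 0` and
`τ ∈ [0,1)`, the map `γ ↦ C(p, τ, γ)` is monotone nonincreasing on `[0, ∞)`, and strictly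
decreasing whenever `p > 0`. -/
theorem capacity_anti_in_jamming_poor_harvesting_link
    (h gA gB NA NB ζ : ℝ)
    (hh : 0 < h) (hgA : 0 ≤ gA) (hgB : 0 ≤ gB)
    (hNA : 0 < NA) (hNB : 0 < NB) (hζ : 0 < ζ) (hζ1 : ζ ≤ 1)
    (hgB' : 0 < gB) (hlink : gA * NB ≤ gB * NA)
    (p τ : ℝ) (hp : 0 ≤ p) (hτ0 : 0 ≤ τ) (hτ1 : τ < 1) :
    AntitoneOn (fun γ => C h gA gB NA NB ζ p τ γ) (Set.Ici 0) ∧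
    (0 < p → StrictAntiOn (fun γ => C h gA gB NA NB ζ p τ γ) (Set.Ici 0)) := by
  have hu0 : (0:ℝ) < 1 - τ := by linarith
  have hA0 : 0 ≤ p / (1 - τ) := div_nonneg hp hu0.le
  have ht0 : 0 ≤ τ / (1 - τ) := div_nonneg hτ0 hu0.le
  have hc0 : (0:ℝ) < (1 - τ) / 2 := by linarith
  -- denominators and numerators
  have hD : ∀ γ : ℝ, 0 ≤ γ → 0 < γ * gB + NB := fun γ hγ =>
    add_pos_of_nonneg_of_pos (mul_nonneg hγ hgB) hNB
  have hN : ∀ γ : ℝ, 0 ≤ γ →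
      0 ≤ (p / (1 - τ) + (τ / (1 - τ)) * ζ * (γ * gA + NA)) * h := fun γ hγ =>
    mul_nonneg (add_nonneg hA0 (mul_nonneg (mul_nonneg ht0 hζ.le)
      (add_nonneg (mul_nonneg hγ hgA) hNA.le))) hh.le
  -- cross-multiplied key inequality
  have key : ∀ x y : ℝ, 0 ≤ x → x ≤ y →
      ((p / (1 - τ) + (τ / (1 - τ)) * ζ * (y * gA + NA)) * h) * (x * gB + NB) ≤
      ((p / (1 - τ) + (τ / (1 - τ)) * ζ * (x * gA + NA)) * h) * (y * gB + NB) := by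
    intro x y hx hxy
    nlinarith [mul_nonneg (mul_nonneg hh.le (mul_nonneg ht0 hζ.le))
        (mul_nonneg (sub_nonneg.2 hxy) (sub_nonneg.2 hlink)),
      mul_nonneg (mul_nonneg hh.le hA0) (mul_nonneg (sub_nonneg.2 hxy) hgB'.le)]
  have keys : 0 < p → ∀ x y : ℝ, 0 ≤ x → x < y →
      ((p / (1 - τ) + (τ / (1 - τ)) * ζ * (y * gA + NA)) * h) * (x * gB + NB) <
      ((p / (1 - τ) + (τ / (1 - τ)) * ζ * (x * gA + NA)) * h) * (y * gB + NB) := by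
    intro hp' x y hx hxy
    have hA' : 0 < p / (1 - τ) := div_pos hp' hu0
    nlinarith [mul_nonneg (mul_nonneg hh.le (mul_nonneg ht0 hζ.le))
        (mul_nonneg (sub_nonneg.2 hxy.le) (sub_nonneg.2 hlink)),
      mul_pos (mul_pos hh hA') (mul_pos (sub_pos.2 hxy) hgB')]
  constructor
  · intro x hx y hy hxy
    simp only [C]
    have hfle : ((p / (1 - τ) + (τ / (1 - τ)) * ζ * (y * gA + NA)) * h) / (y * gB + NB) ≤
        ((p / (1 - τ) + (τ / (1 - τ)) * ζ * (x * gA + NA)) * h) / (x * gB + NB) :=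
      (div_le_div_iff₀ (hD y hy) (hD x hx)).2 (key x y hx hxy)
    have h1 : 0 < 1 + ((p / (1 - τ) + (τ / (1 - τ)) * ζ * (y * gA + NA)) * h) / (y * gB + NB) := by
      have := div_nonneg (hN y hy) (hD y hy).le
      linarith
    have h2 := Real.log_le_log h1 (add_le_add_right hfle 1)
    exact mul_le_mul_of_nonneg_left h2 hc0.le
  · intro hp' x hx y hy hxy
    simp only [C]
    have hflt : ((p / (1 - τ) + (τ / (1 - τ)) * ζ * (y * gA + NA)) * h) / (y * gB + NB) <
        ((p / (1 - τ) + (τ / (1 - τ)) * ζ * (x * gA + NA)) * h) / (x * gB + NB) :=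
      (div_lt_div_iff₀ (hD y hy) (hD x hx)).2 (keys hp' x y hx hxy)
    have h1 : 0 < 1 + ((p / (1 - τ) + (τ / (1 - τ)) * ζ * (y * gA + NA)) * h) / (y * gB + NB) := by
      have := div_nonneg (hN y hy) (hD y hy).le
      linarith
    have h2 := Real.log_lt_log h1 (add_lt_add_right hflt 1)
    exact mul_lt_mul_of_pos_left h2 hc0
end

section
/- Assume g_B > 0 and let Γ > 0 be the jammer's maximum power. If the transmit power and harvesting fraction satisfy p ≤ τ·K (the jammer-neutralization condition), then γ = 0 minimizes the capacity available to the jammer over its strategy set: C(p, τ, 0) ≤ C(p, τ, γ) for all γ ∈ [0, Γ]; that is, the jammer's optimal (capacity-minimizing) response is to remain silent. -/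
/-- If `g_B > 0`, `Γ > 0`, and the legitimate strategy satisfies the
neutralization condition `p ≤ τ·K` with `K = ζ·(g_A·N_B/g_B − N_A)`, then `γ = 0`
minimizes the capacity over the jammer's strategy set `[0, Γ]`:
`C(p, τ, 0) ≤ C(p, τ, γ)` for all `γ ∈ [0, Γ]`. -/
theorem jammer_best_response_silent
    (h gA gB NA NB ζ : ℝ)
    (hh : 0 < h) (hgA : 0 ≤ gA) (hgB : 0 ≤ gB)
    (hNA : 0 < NA) (hNB : 0 < NB) (hζ : 0 < ζ) (hζ1 : ζ ≤ 1)
    (hgB' : 0 < gB) (Γ : ℝ) (hΓ : 0 < Γ)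
    (p τ : ℝ) (hp : 0 ≤ p) (hτ0 : 0 ≤ τ) (hτ1 : τ < 1)
    (hpth : p ≤ τ * (ζ * (gA * NB / gB - NA))) :
    ∀ γ ∈ Set.Icc 0 Γ, C h gA gB NA NB ζ p τ 0 ≤ C h gA gB NA NB ζ p τ γ := by
  intro γ hγ
  obtain ⟨hγ0, hγΓ⟩ := hγ
  have h1τ : 0 < 1 - τ := by linarith
  have hkey : p * gB ≤ τ * ζ * (gA * NB - NA * gB) := by
    have h2 := mul_le_mul_of_nonneg_right hpth hgB'.le
    have h4 : τ * (ζ * (gA * NB / gB - NA)) * gB = τ * ζ * (gA * NB - NA * gB) := by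
      field_simp
    linarith [h2]
  have hdenγ : 0 < γ * gB + NB := by positivity
  have hnum0 : 0 ≤ (p / (1 - τ) + (τ / (1 - τ)) * ζ * ((0:ℝ) * gA + NA)) * h := by positivity
  have hnumγ : 0 ≤ (p / (1 - τ) + (τ / (1 - τ)) * ζ * (γ * gA + NA)) * h := by positivity
  unfold C
  apply mul_le_mul_of_nonneg_left _ (by positivity : (0:ℝ) ≤ (1 - τ) / 2)
  apply Real.log_le_log
  · have : (0:ℝ) ≤ ((p / (1 - τ) + (τ / (1 - τ)) * ζ * ((0:ℝ) * gA + NA)) * h) / ((0:ℝ) * gB + NB) := by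
      apply div_nonneg hnum0; positivity
    linarith
  · have hmain : ((p / (1 - τ) + (τ / (1 - τ)) * ζ * ((0:ℝ) * gA + NA)) * h) / ((0:ℝ) * gB + NB)
        ≤ ((p / (1 - τ) + (τ / (1 - τ)) * ζ * (γ * gA + NA)) * h) / (γ * gB + NB) := by
      rw [div_le_div_iff₀ (by positivity) hdenγ]
      have e1 : p / (1 - τ) = p * (1 - τ)⁻¹ := div_eq_mul_inv _ _
      have e2 : τ / (1 - τ) = τ * (1 - τ)⁻¹ := div_eq_mul_inv _ _
      have hinv : 0 < (1 - τ)⁻¹ := by positivity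
      rw [e1, e2]
      nlinarith [mul_nonneg (mul_nonneg (mul_nonneg hh.le hγ0) hinv.le)
        (sub_nonneg.2 hkey)]
    linarith
end

section
/- Assume g_B > 0 and let Γ > 0 be the jammer's maximum power. If the transmit power and harvesting fraction satisfy p > τ·K, then γ = Γ minimizes the capacity over the jammer's strategy set: C(p, τ, Γ) ≤ C(p, τ, γ) for all γ ∈ [0, Γ]; that is, the jammer's optimal (capacity-minimizing) response is to jam at full power. -/
/-- If `g_B > 0`, `Γ > 0`, and `p > τ·K` with `K = ζ·(g_A·N_B/g_B − N_A)`,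
then `γ = Γ` minimizes the capacity over the jammer's strategy set `[0, Γ]`:
`C(p, τ, Γ) ≤ C(p, τ, γ)` for all `γ ∈ [0, Γ]`. -/
theorem jammer_best_response_full_power
    (h gA gB NA NB ζ : ℝ)
    (hh : 0 < h) (hgA : 0 ≤ gA) (hgB : 0 ≤ gB)
    (hNA : 0 < NA) (hNB : 0 < NB) (hζ : 0 < ζ) (hζ1 : ζ ≤ 1)
    (hgB' : 0 < gB) (Γ : ℝ) (hΓ : 0 < Γ)
    (p τ : ℝ) (hp : 0 ≤ p) (hτ0 : 0 ≤ τ) (hτ1 : τ < 1)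
    (hpth : p > τ * (ζ * (gA * NB / gB - NA))) :
    ∀ γ ∈ Set.Icc 0 Γ, C h gA gB NA NB ζ p τ Γ ≤ C h gA gB NA NB ζ p τ γ := by
  intro γ hγ
  obtain ⟨hγ0, hγΓ⟩ := hγ
  have h1τ : (0:ℝ) < 1 - τ := by linarith
  have hne : (1 - τ) ≠ 0 := h1τ.ne'
  have dγ : 0 < γ * gB + NB := by nlinarith [mul_nonneg hγ0 hgB]
  have dΓ : 0 < Γ * gB + NB := by nlinarith [mul_nonneg hΓ.le hgB]
  -- p * gB dominates
  have hpg : τ * ζ * (gA * NB - NA * gB) < p * gB := by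
    have key0 : τ * (ζ * (gA * NB / gB - NA)) * gB = τ * ζ * (gA * NB - NA * gB) := by
      field_simp
    linarith [mul_lt_mul_of_pos_right hpth hgB', key0]
  have numγ : 0 ≤ (p / (1 - τ) + (τ / (1 - τ)) * ζ * (γ * gA + NA)) * h := by
    apply mul_nonneg _ hh.le
    have : 0 ≤ γ * gA := mul_nonneg hγ0 hgA
    have : 0 ≤ (τ / (1 - τ)) * ζ * (γ * gA + NA) := by
      apply mul_nonneg (mul_nonneg (div_nonneg hτ0 h1τ.le) hζ.le); linarith
    have : 0 ≤ p / (1 - τ) := div_nonneg hp h1τ.le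
    linarith
  have key : ((p / (1 - τ) + (τ / (1 - τ)) * ζ * (Γ * gA + NA)) * h) / (Γ * gB + NB)
      ≤ ((p / (1 - τ) + (τ / (1 - τ)) * ζ * (γ * gA + NA)) * h) / (γ * gB + NB) := by
    have eΓ : p / (1 - τ) + (τ / (1 - τ)) * ζ * (Γ * gA + NA)
        = (p + τ * ζ * (Γ * gA + NA)) / (1 - τ) := by field_simp
    have eγ : p / (1 - τ) + (τ / (1 - τ)) * ζ * (γ * gA + NA)
        = (p + τ * ζ * (γ * gA + NA)) / (1 - τ) := by field_simp
    rw [eΓ, eγ, div_mul_eq_mul_div, div_mul_eq_mul_div, div_div, div_div,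
        div_le_div_iff₀ (mul_pos h1τ dΓ) (mul_pos h1τ dγ)]
    nlinarith [mul_nonneg (mul_nonneg (mul_nonneg h1τ.le hh.le)
        (sub_nonneg.2 hγΓ)) (sub_nonneg.2 hpg.le)]
  unfold C
  apply mul_le_mul_of_nonneg_left _ (by linarith : (0:ℝ) ≤ (1 - τ) / 2)
  apply Real.log_le_log (by positivity)
  linarith
end

section
/- Assume g_B > 0. If the transmit power equals the threshold exactly, p = τ·K with K = ζ·(g_A·N_B/g_B − N_A), then the capacity does not depend on the jamming power: C(p, τ, γ) = C(p, τ, 0) for all γ ≥ 0. -/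
/-- If `g_B > 0` and `p = τ·K` with `K = ζ·(g_A·N_B/g_B − N_A)`, then the
capacity does not depend on the jamming power: `C(p, τ, γ) = C(p, τ, 0)` for all `γ ≥ 0`. -/
theorem capacity_constant_at_threshold
    (h gA gB NA NB ζ : ℝ)
    (hh : 0 < h) (hgA : 0 ≤ gA) (hgB : 0 ≤ gB)
    (hNA : 0 < NA) (hNB : 0 < NB) (hζ : 0 < ζ) (hζ1 : ζ ≤ 1)
    (hgB' : 0 < gB)
    (p τ : ℝ) (hp : 0 ≤ p) (hτ0 : 0 ≤ τ) (hτ1 : τ < 1)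
    (hpth : p = τ * (ζ * (gA * NB / gB - NA))) :
    ∀ γ : ℝ, 0 ≤ γ → C h gA gB NA NB ζ p τ γ = C h gA gB NA NB ζ p τ 0 := by
  intro γ hγ
  have hτ : (1 : ℝ) - τ ≠ 0 := by linarith
  have hgB0 : gB ≠ 0 := ne_of_gt hgB'
  have hd1 : γ * gB + NB ≠ 0 := by positivity
  have hd2 : (0:ℝ) * gB + NB ≠ 0 := by positivity
  unfold C
  congr 2
  subst hpth
  field_simp
  ring
end

section
/- For every fixed transmit power p ≥ 0 and jamming power γ ≥ 0, the function τ ↦ C(p, τ, γ) is strictly concave on the interval [0, 1). -/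
lemma transfer' {s : Set ℝ} {f g : ℝ → ℝ} (hfg : ∀ x ∈ s, f x = g x)
    (hg : StrictConcaveOn ℝ s g) : StrictConcaveOn ℝ s f := by
  refine ⟨hg.1, fun x hx y hy hxy a b ha hb hab => ?_⟩
  rw [hfg x hx, hfg y hy, hfg _ (hg.1 hx hy ha.le hb.le hab)]
  exact hg.2 hx hy hxy ha hb hab

lemma key (c d : ℝ) (hc : 0 < c) (hcd : 0 < c + d) :
    StrictConcaveOn ℝ (Set.Ico 0 1)
      (fun τ : ℝ => (1/2) * ((1 - τ) * Real.log (c + d * (1 - τ)) - (1 - τ) * Real.log (1 - τ))) := by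
  set g : ℝ → ℝ := fun τ => (1/2) * ((1 - τ) * Real.log (c + d * (1 - τ)) - (1 - τ) * Real.log (1 - τ)) with hgdef
  set g' : ℝ → ℝ := fun τ => (1/2) * (-(Real.log (c + d * (1 - τ))) - d * (1 - τ) / (c + d * (1 - τ)) + Real.log (1 - τ) + 1) with hg'
  set g'' : ℝ → ℝ := fun τ => (1/2) * (2 * d / (c + d * (1 - τ)) - d^2 * (1 - τ) / (c + d * (1 - τ))^2 - 1 / (1 - τ)) with hg''
  have hN : ∀ τ : ℝ, τ ∈ Set.Ico (0:ℝ) 1 → 0 < c + d * (1 - τ) := by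
    intro τ ⟨h0, h1⟩
    have hs : 0 < 1 - τ := by linarith
    nlinarith [mul_pos hcd hs, mul_nonneg hc.le h0]
  have hd1 : ∀ τ : ℝ, τ ∈ Set.Ico (0:ℝ) 1 → HasDerivAt g (g' τ) τ := by
    intro τ hτ
    have hs : 0 < 1 - τ := by linarith [hτ.2]
    have hNτ := hN τ hτ
    have h1 : HasDerivAt (fun x : ℝ => 1 - x) (-1) τ := (hasDerivAt_id τ).const_sub 1
    have hins : HasDerivAt (fun x : ℝ => c + d * (1 - x)) (d * -1) τ :=
      (h1.const_mul d).const_add c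
    have hlog : HasDerivAt (fun x : ℝ => Real.log (c + d * (1 - x)))
        ((c + d * (1 - τ))⁻¹ * (d * -1)) τ := by
        have := (Real.hasDerivAt_log hNτ.ne').comp τ hins; exact this
    have hlog2 : HasDerivAt (fun x : ℝ => Real.log (1 - x)) ((1 - τ)⁻¹ * -1) τ :=
      (Real.hasDerivAt_log hs.ne').comp τ h1
    have h2 := ((h1.mul hlog).sub (h1.mul hlog2)).const_mul (1/2 : ℝ)
    have h2' : HasDerivAt g _ τ := h2
    convert h2' using 1
    rw [hg']
    beta_reduce
    set s := 1 - τ with hsdef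
    set N := c + d * s with hNdef
    field_simp
    ring
  have hd2 : ∀ τ : ℝ, τ ∈ Set.Ico (0:ℝ) 1 → HasDerivAt g' (g'' τ) τ := by
    intro τ hτ
    have hs : 0 < 1 - τ := by linarith [hτ.2]
    have hNτ := hN τ hτ
    have h1 : HasDerivAt (fun x : ℝ => 1 - x) (-1) τ := (hasDerivAt_id τ).const_sub 1
    have hins : HasDerivAt (fun x : ℝ => c + d * (1 - x)) (d * -1) τ :=
      (h1.const_mul d).const_add c
    have hlog : HasDerivAt (fun x : ℝ => Real.log (c + d * (1 - x)))
        ((c + d * (1 - τ))⁻¹ * (d * -1)) τ := by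
        have := (Real.hasDerivAt_log hNτ.ne').comp τ hins; exact this
    have hlog2 : HasDerivAt (fun x : ℝ => Real.log (1 - x)) ((1 - τ)⁻¹ * -1) τ :=
      (Real.hasDerivAt_log hs.ne').comp τ h1
    have hinv : HasDerivAt (fun x : ℝ => (c + d * (1 - x))⁻¹)
        (-(d * -1) / (c + d * (1 - τ))^2) τ := hins.inv hNτ.ne'
    have hfrac : HasDerivAt (fun x : ℝ => d * (1 - x) / (c + d * (1 - x)))
        ((d * -1) * (c + d * (1 - τ))⁻¹ + (d * (1 - τ)) * (-(d * -1) / (c + d * (1 - τ))^2)) τ := by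
      have h3 : HasDerivAt (fun x => d * (1 - x) * (c + d * (1 - x))⁻¹) _ τ := (h1.const_mul d).mul hinv
      simpa [div_eq_mul_inv] using h3
    have h2 := (((hlog.neg.sub hfrac).add hlog2).add_const 1).const_mul (1/2 : ℝ)
    have h2' : HasDerivAt g' _ τ := h2
    convert h2' using 1
    rw [hg'']
    beta_reduce
    set s := 1 - τ with hsdef
    set N := c + d * s with hNdef
    field_simp
    ring
  apply strictConcaveOn_of_deriv2_neg (convex_Ico 0 1)
  · exact fun τ hτ => (hd1 τ hτ).continuousAt.continuousWithinAt
  · intro x hx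
    rw [interior_Ico] at hx
    have hx' : x ∈ Set.Ico (0:ℝ) 1 := Set.mem_Ico.2 ⟨hx.1.le, hx.2⟩
    have hs : 0 < 1 - x := by linarith [hx.2]
    have hNx := hN x hx'
    have hev : deriv g =ᶠ[nhds x] g' := by
      filter_upwards [isOpen_Ioo.mem_nhds hx] with y hy
      exact (hd1 y (Set.mem_Ico.2 ⟨hy.1.le, hy.2⟩)).deriv
    have hder2 : deriv (deriv g) x = g'' x := by
      rw [hev.deriv_eq]
      exact (hd2 x hx').deriv
    simp only [Function.iterate_succ, Function.iterate_zero, Function.comp_apply, id_eq]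
    rw [hder2, hg'']
    beta_reduce
    have hkey : (1/2 : ℝ) * (2 * d / (c + d * (1 - x)) - d^2 * (1 - x) / (c + d * (1 - x))^2 - 1 / (1 - x))
        = -(((c + d * (1 - x)) - d * (1 - x))^2) / (2 * (1 - x) * (c + d * (1 - x))^2) := by
      set s := 1 - x with hsdef
      set N := c + d * s with hNdef
      field_simp
      ring
    rw [hkey]
    have hc2 : (c + d * (1 - x)) - d * (1 - x) = c := by ring
    rw [hc2]
    apply div_neg_of_neg_of_pos
    · nlinarith
    · positivity


/-- For every fixed `p ≥ 0` and `γ ≥ 0`, the map `τ ↦ C(p, τ, γ)` is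
strictly concave on `[0, 1)`. -/
theorem capacity_strictConcave_in_tau
    (h gA gB NA NB ζ : ℝ)
    (hh : 0 < h) (hgA : 0 ≤ gA) (hgB : 0 ≤ gB)
    (hNA : 0 < NA) (hNB : 0 < NB) (hζ : 0 < ζ) (hζ1 : ζ ≤ 1)
    (p γ : ℝ) (hp : 0 ≤ p) (hγ : 0 ≤ γ) :
    StrictConcaveOn ℝ (Set.Ico 0 1) (fun τ => C h gA gB NA NB ζ p τ γ) := by
  have hA : 0 < γ * gA + NA := by nlinarith
  have hB : 0 < γ * gB + NB := by nlinarith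
  set a : ℝ := p * h / (γ * gB + NB) with ha
  set b : ℝ := ζ * (γ * gA + NA) * h / (γ * gB + NB) with hb
  have ha0 : 0 ≤ a := by positivity
  have hb0 : 0 < b := by positivity
  have hc : 0 < a + b := by linarith
  have hcd : 0 < (a + b) + (1 - b) := by linarith
  apply transfer' _ (key (a + b) (1 - b) hc hcd)
  intro x hx
  obtain ⟨hx0, hx1⟩ := hx
  have hs : 0 < 1 - x := by linarith
  have hNx : 0 < (a + b) + (1 - b) * (1 - x) := by nlinarith
  have harg : 1 + ((p / (1 - x) + (x / (1 - x)) * ζ * (γ * gA + NA)) * h) / (γ * gB + NB)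
      = ((a + b) + (1 - b) * (1 - x)) / (1 - x) := by
    rw [ha, hb]; field_simp; ring
  rw [C, harg, Real.log_div hNx.ne' hs.ne']
  ring
end

section
/- Fix a maximum transmit power P > 0 and a maximum jamming power Γ > 0. There exists a unique τ* ∈ [0, 1) maximizing the function τ ↦ C(P, τ, Γ) over [0, 1); moreover either τ* = 0, or τ* ∈ (0, 1) and the derivative of τ ↦ C(P, τ, Γ) vanishes at τ*. -/
open Set

noncomputable def fEH (a c s : ℝ) : ℝ := s / 2 * Real.log (c + a / s)

noncomputable def phiEH (a c s : ℝ) : ℝ := (Real.log (c + a / s) - a / (s * c + a)) / 2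

lemma argpos {a c : ℝ} (ha : 0 < a) (hca : 0 < c + a) {s : ℝ} (hs : s ∈ Set.Ioc (0:ℝ) 1) :
    0 < c + a / s := by
  have h1 : a ≤ a / s := by
    rw [le_div_iff₀ hs.1]
    nlinarith [hs.2, ha.le, hs.1]
  linarith

lemma linpos {a c : ℝ} (ha : 0 < a) (hca : 0 < c + a) {s : ℝ} (hs : s ∈ Set.Ioc (0:ℝ) 1) :
    0 < s * c + a := by
  have h1 := argpos ha hca hs
  have hs0 : s ≠ 0 := ne_of_gt hs.1
  have h2 : 0 < s * (c + a / s) := mul_pos hs.1 h1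
  have he : s * (c + a / s) = s * c + a := by field_simp
  linarith

lemma hasDerivAt_fEH {a c : ℝ} (ha : 0 < a) (hca : 0 < c + a) {s : ℝ}
    (hs : s ∈ Set.Ioc (0:ℝ) 1) :
    HasDerivAt (fEH a c) (phiEH a c s) s := by
  have hs0 : s ≠ 0 := ne_of_gt hs.1
  have hpos := argpos ha hca hs
  have hlin := linpos ha hca hs
  have h1 : HasDerivAt (fun x : ℝ => c + a / x) (a * (-(s ^ 2)⁻¹)) s := by
    simpa [div_eq_mul_inv] using ((hasDerivAt_inv hs0).const_mul a).const_add c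
  have h2 : HasDerivAt (fun x : ℝ => Real.log (c + a / x))
      (a * (-(s ^ 2)⁻¹) / (c + a / s)) s := h1.log (ne_of_gt hpos)
  have h3 : HasDerivAt (fun x : ℝ => x / 2) ((1:ℝ) / 2) s := by
    simpa using (hasDerivAt_id s).div_const 2
  have h4 := h3.mul h2
  have hkey : c + a / s = (s * c + a) / s := by field_simp
  refine h4.congr_deriv ?_
  symm
  unfold phiEH
  rw [hkey, div_div_eq_mul_div]
  have hl : (s * c + a) ≠ 0 := ne_of_gt hlin
  field_simp
  ring

lemma hasDerivAt_phiEH {a c : ℝ} (ha : 0 < a) (hca : 0 < c + a) {s : ℝ}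
    (hs : s ∈ Set.Ioc (0:ℝ) 1) :
    HasDerivAt (phiEH a c) (-(a ^ 2 / (2 * s * (s * c + a) ^ 2))) s := by
  have hs0 : s ≠ 0 := ne_of_gt hs.1
  have hpos := argpos ha hca hs
  have hlin := linpos ha hca hs
  have h1 : HasDerivAt (fun x : ℝ => c + a / x) (a * (-(s ^ 2)⁻¹)) s := by
    simpa [div_eq_mul_inv] using ((hasDerivAt_inv hs0).const_mul a).const_add c
  have h2 : HasDerivAt (fun x : ℝ => Real.log (c + a / x))
      (a * (-(s ^ 2)⁻¹) / (c + a / s)) s := h1.log (ne_of_gt hpos)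
  have h4 : HasDerivAt (fun x : ℝ => x * c + a) c s := by
    simpa using ((hasDerivAt_id s).mul_const c).add_const a
  have h5 : HasDerivAt (fun x : ℝ => a / (x * c + a))
      ((0 * (s * c + a) - a * c) / (s * c + a) ^ 2) s :=
    (hasDerivAt_const s a).div h4 (ne_of_gt hlin)
  have hkey : c + a / s = (s * c + a) / s := by field_simp
  have h6 := (h2.sub h5).div_const 2
  refine h6.congr_deriv ?_
  symm
  rw [hkey, div_div_eq_mul_div]
  have hl : (s * c + a) ≠ 0 := ne_of_gt hlin
  field_simp
  ring

lemma phi_strictAnti {a c : ℝ} (ha : 0 < a) (hca : 0 < c + a) :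
    StrictAntiOn (phiEH a c) (Set.Ioc (0:ℝ) 1) := by
  apply strictAntiOn_of_deriv_neg (convex_Ioc 0 1)
  · intro x hx
    exact (hasDerivAt_phiEH ha hca hx).continuousAt.continuousWithinAt
  · intro x hx
    rw [interior_Ioc] at hx
    have hx' : x ∈ Set.Ioc (0:ℝ) 1 := ⟨hx.1, hx.2.le⟩
    rw [(hasDerivAt_phiEH ha hca hx').deriv]
    have hlin := linpos ha hca hx'
    have : 0 < a ^ 2 / (2 * x * (x * c + a) ^ 2) := by
      apply div_pos (pow_pos ha 2)
      have := pow_pos hlin 2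
      nlinarith [hx.1]
    linarith

/-- For `P > 0` and `Γ > 0`, there exists a unique maximizer
`τ* ∈ [0, 1)` of `τ ↦ C(P, τ, Γ)` over `[0, 1)`; moreover either `τ* = 0`, or
`τ* ∈ (0, 1)` and the derivative of `τ ↦ C(P, τ, Γ)` vanishes at `τ*`. -/
theorem exists_unique_tau_NE
    (h gA gB NA NB ζ : ℝ)
    (hh : 0 < h) (hgA : 0 ≤ gA) (hgB : 0 ≤ gB)
    (hNA : 0 < NA) (hNB : 0 < NB) (hζ : 0 < ζ) (hζ1 : ζ ≤ 1)
    (P Γ : ℝ) (hP : 0 < P) (hΓ : 0 < Γ) :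
    ∃ τs ∈ Set.Ico (0:ℝ) 1,
      (∀ τ ∈ Set.Ico (0:ℝ) 1, C h gA gB NA NB ζ P τ Γ ≤ C h gA gB NA NB ζ P τs Γ) ∧
      (∀ τ' ∈ Set.Ico (0:ℝ) 1,
        (∀ τ ∈ Set.Ico (0:ℝ) 1, C h gA gB NA NB ζ P τ Γ ≤ C h gA gB NA NB ζ P τ' Γ) →
        τ' = τs) ∧
      (τs = 0 ∨ (τs ∈ Set.Ioo (0:ℝ) 1 ∧ deriv (fun τ => C h gA gB NA NB ζ P τ Γ) τs = 0)) := by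
  have hB : (0:ℝ) < Γ * gB + NB :=
    add_pos_of_nonneg_of_pos (mul_nonneg hΓ.le hgB) hNB
  have hAp : (0:ℝ) < Γ * gA + NA :=
    add_pos_of_nonneg_of_pos (mul_nonneg hΓ.le hgA) hNA
  have hF : ∀ τ : ℝ, C h gA gB NA NB ζ P τ Γ =
      fEH ((P + ζ * (Γ * gA + NA)) * h / (Γ * gB + NB))
          (1 - ζ * (Γ * gA + NA) * h / (Γ * gB + NB)) (1 - τ) := by
    intro τ
    by_cases ht : τ = 1
    · subst ht; simp [C, fEH]
    · have h1 : (1:ℝ) - τ ≠ 0 := sub_ne_zero.mpr (Ne.symm ht)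
      unfold C fEH
      congr 2
      field_simp
      ring
  obtain ⟨a, c, ha, hca, hF⟩ : ∃ a c : ℝ, 0 < a ∧ 0 < c + a ∧
      ∀ τ : ℝ, C h gA gB NA NB ζ P τ Γ = fEH a c (1 - τ) := by
    refine ⟨(P + ζ * (Γ * gA + NA)) * h / (Γ * gB + NB),
      1 - ζ * (Γ * gA + NA) * h / (Γ * gB + NB), ?_, ?_, hF⟩
    · exact div_pos (mul_pos (by nlinarith) hh) hB
    · have hkey : 1 - ζ * (Γ * gA + NA) * h / (Γ * gB + NB) +
          (P + ζ * (Γ * gA + NA)) * h / (Γ * gB + NB) = 1 + P * h / (Γ * gB + NB) := by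
        field_simp; ring
      have : 0 < P * h / (Γ * gB + NB) := div_pos (mul_pos hP hh) hB
      rw [hkey]; linarith
  have hAnti := phi_strictAnti ha hca
  rcases le_or_gt 0 (phiEH a c 1) with hphi1 | hphi1
  · -- maximizer at τ = 0
    have hmono : StrictMonoOn (fEH a c) (Set.Ioc (0:ℝ) 1) := by
      apply strictMonoOn_of_deriv_pos (convex_Ioc 0 1)
      · intro x hx
        exact (hasDerivAt_fEH ha hca hx).continuousAt.continuousWithinAt
      · intro x hx
        rw [interior_Ioc] at hx
        have hx' : x ∈ Set.Ioc (0:ℝ) 1 := ⟨hx.1, hx.2.le⟩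
        rw [(hasDerivAt_fEH ha hca hx').deriv]
        have := hAnti hx' ⟨zero_lt_one, le_refl 1⟩ hx.2
        linarith
    refine ⟨0, ⟨le_refl 0, zero_lt_one⟩, ?_, ?_, Or.inl rfl⟩
    · intro τ hτ
      rw [hF, hF]
      have hmem : (1:ℝ) - τ ∈ Set.Ioc (0:ℝ) 1 := ⟨by linarith [hτ.2], by linarith [hτ.1]⟩
      have : fEH a c (1 - τ) ≤ fEH a c 1 :=
        hmono.monotoneOn hmem ⟨zero_lt_one, le_refl 1⟩ (by linarith [hτ.1])
      simpa using this
    · intro τ' hτ' hmax'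
      by_contra hne
      have hτ'0 : 0 < τ' := lt_of_le_of_ne hτ'.1 (Ne.symm hne)
      have hmem : (1:ℝ) - τ' ∈ Set.Ioc (0:ℝ) 1 := ⟨by linarith [hτ'.2], by linarith [hτ'.1]⟩
      have hlt : fEH a c (1 - τ') < fEH a c 1 :=
        hmono hmem ⟨zero_lt_one, le_refl 1⟩ (by linarith)
      have := hmax' 0 ⟨le_refl 0, zero_lt_one⟩
      rw [hF, hF] at this
      simp only [sub_zero] at this
      linarith
  · -- interior maximizer
    obtain ⟨m, hm, hlb⟩ : ∃ m : ℝ, 0 < m ∧ ∀ s ∈ Set.Ioc (0:ℝ) 1, m ≤ s * c + a := by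
      refine ⟨min a (c + a), lt_min ha hca, ?_⟩
      intro s hs
      rcases le_or_gt 0 c with hc | hc
      · have : 0 ≤ s * c := mul_nonneg hs.1.le hc
        have := min_le_left a (c + a)
        linarith
      · have h1 : c ≤ s * c := by nlinarith [hs.2]
        have := min_le_right a (c + a)
        linarith
    obtain ⟨s₀, hs₀pos, hs₀lt1, hφs₀⟩ :
        ∃ s₀ : ℝ, 0 < s₀ ∧ s₀ < 1 ∧ 0 < phiEH a c s₀ := by
      have hD : 0 < Real.exp (a / m) + |c| + a := by
        have := Real.exp_pos (a / m)
        have := abs_nonneg c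
        linarith
      refine ⟨a / (Real.exp (a / m) + |c| + a), div_pos ha hD, ?_, ?_⟩
      · rw [div_lt_one hD]
        have := Real.exp_pos (a / m)
        have := abs_nonneg c
        linarith
      · have hs₀mem : a / (Real.exp (a / m) + |c| + a) ∈ Set.Ioc (0:ℝ) 1 := by
          constructor
          · exact div_pos ha hD
          · rw [div_le_one hD]
            have := Real.exp_pos (a / m)
            have := abs_nonneg c
            linarith
        have has₀ : a / (a / (Real.exp (a / m) + |c| + a)) = Real.exp (a / m) + |c| + a := by
          field_simp
        have hargpos := argpos ha hca hs₀mem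
        have h1 : a / m < Real.log (c + a / (a / (Real.exp (a / m) + |c| + a))) := by
          rw [Real.lt_log_iff_exp_lt hargpos, has₀]
          have := neg_abs_le c
          linarith
        have h2 : a / (a / (Real.exp (a / m) + |c| + a) * c + a) ≤ a / m := by
          have := hlb _ hs₀mem
          gcongr
        unfold phiEH
        have : 0 < Real.log (c + a / (a / (Real.exp (a / m) + |c| + a))) -
            a / (a / (Real.exp (a / m) + |c| + a) * c + a) := by linarith
        linarith
    have hs₀mem : s₀ ∈ Set.Ioc (0:ℝ) 1 := ⟨hs₀pos, hs₀lt1.le⟩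
    have hcontφ : ContinuousOn (phiEH a c) (Set.Icc s₀ 1) := by
      intro x hx
      have hx' : x ∈ Set.Ioc (0:ℝ) 1 := ⟨lt_of_lt_of_le hs₀pos hx.1, hx.2⟩
      exact (hasDerivAt_phiEH ha hca hx').continuousAt.continuousWithinAt
    have hIVT := intermediate_value_Ioo' hs₀lt1.le hcontφ
    have h0mem : (0:ℝ) ∈ Set.Ioo (phiEH a c 1) (phiEH a c s₀) := ⟨hphi1, hφs₀⟩
    obtain ⟨sstar, hsIoo, hφstar⟩ := hIVT h0mem
    have hsmem : sstar ∈ Set.Ioo (0:ℝ) 1 := ⟨lt_trans hs₀pos hsIoo.1, hsIoo.2⟩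
    have hsmem' : sstar ∈ Set.Ioc (0:ℝ) 1 := ⟨hsmem.1, hsmem.2.le⟩
    have hmono : StrictMonoOn (fEH a c) (Set.Ioc (0:ℝ) sstar) := by
      apply strictMonoOn_of_deriv_pos (convex_Ioc 0 sstar)
      · intro x hx
        have hx' : x ∈ Set.Ioc (0:ℝ) 1 := ⟨hx.1, le_trans hx.2 hsmem.2.le⟩
        exact (hasDerivAt_fEH ha hca hx').continuousAt.continuousWithinAt
      · intro x hx
        rw [interior_Ioc] at hx
        have hx' : x ∈ Set.Ioc (0:ℝ) 1 := ⟨hx.1, le_trans hx.2.le hsmem.2.le⟩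
        rw [(hasDerivAt_fEH ha hca hx').deriv]
        have := hAnti hx' hsmem' hx.2
        rw [hφstar] at this
        linarith
    have hanti : StrictAntiOn (fEH a c) (Set.Icc sstar 1) := by
      apply strictAntiOn_of_deriv_neg (convex_Icc sstar 1)
      · intro x hx
        have hx' : x ∈ Set.Ioc (0:ℝ) 1 := ⟨lt_of_lt_of_le hsmem.1 hx.1, hx.2⟩
        exact (hasDerivAt_fEH ha hca hx').continuousAt.continuousWithinAt
      · intro x hx
        rw [interior_Icc] at hx
        have hx' : x ∈ Set.Ioc (0:ℝ) 1 := ⟨lt_trans hsmem.1 hx.1, hx.2.le⟩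
        rw [(hasDerivAt_fEH ha hca hx').deriv]
        have := hAnti hsmem' hx' hx.1
        rw [hφstar] at this
        linarith
    have h1s : (1:ℝ) - (1 - sstar) = sstar := by ring
    have hmax : ∀ τ ∈ Set.Ico (0:ℝ) 1,
        C h gA gB NA NB ζ P τ Γ ≤ C h gA gB NA NB ζ P (1 - sstar) Γ := by
      intro τ hτ
      rw [hF, hF, h1s]
      have hmem : (1:ℝ) - τ ∈ Set.Ioc (0:ℝ) 1 := ⟨by linarith [hτ.2], by linarith [hτ.1]⟩
      rcases le_or_gt (1 - τ) sstar with hle | hlt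
      · exact hmono.monotoneOn ⟨hmem.1, hle⟩ ⟨hsmem.1, le_refl _⟩ hle
      · exact hanti.antitoneOn ⟨le_refl _, hsmem.2.le⟩ ⟨hlt.le, hmem.2⟩ hlt.le
    refine ⟨1 - sstar, ⟨by linarith [hsmem.2], by linarith [hsmem.1]⟩, hmax, ?_, ?_⟩
    · intro τ' hτ' hmax'
      have hmem' : (1:ℝ) - τ' ∈ Set.Ioc (0:ℝ) 1 := ⟨by linarith [hτ'.2], by linarith [hτ'.1]⟩
      have e1 : C h gA gB NA NB ζ P τ' Γ ≤ C h gA gB NA NB ζ P (1 - sstar) Γ :=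
        hmax τ' hτ'
      have e2 : C h gA gB NA NB ζ P (1 - sstar) Γ ≤ C h gA gB NA NB ζ P τ' Γ :=
        hmax' (1 - sstar) ⟨by linarith [hsmem.2], by linarith [hsmem.1]⟩
      have heq : fEH a c (1 - τ') = fEH a c sstar := by
        have := le_antisymm e1 e2
        rw [hF, hF, h1s] at this
        exact this
      rcases lt_trichotomy (1 - τ') sstar with hlt | heq' | hgt
      · have := hmono ⟨hmem'.1, hlt.le⟩ ⟨hsmem.1, le_refl _⟩ hlt
        linarith [this, heq.ge]
      · linarith
      · have := hanti ⟨le_refl _, hsmem.2.le⟩ ⟨hgt.le, hmem'.2⟩ hgt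
        linarith [this, heq.le]
    · refine Or.inr ⟨⟨by linarith [hsmem.2], by linarith [hsmem.1]⟩, ?_⟩
      have hfun : (fun τ => C h gA gB NA NB ζ P τ Γ) = fun τ => fEH a c (1 - τ) :=
        funext hF
      rw [hfun]
      have hinner : HasDerivAt (fun τ : ℝ => 1 - τ) (-1) (1 - sstar) := by
        simpa using (hasDerivAt_id (1 - sstar)).const_sub 1
      have houter : HasDerivAt (fEH a c) (phiEH a c sstar) ((fun τ : ℝ => 1 - τ) (1 - sstar)) := by
        simp only [h1s]
        exact hasDerivAt_fEH ha hca hsmem'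
      have hd := HasDerivAt.comp (1 - sstar) houter hinner
      have hd' : HasDerivAt (fun τ : ℝ => fEH a c (1 - τ)) (phiEH a c sstar * -1) (1 - sstar) := hd
      rw [hd'.deriv, hφstar, zero_mul]
end

section
/- Fix a maximum jamming power Γ > 0 and a maximum transmit power P > 0. The function τ ↦ C(P, τ, Γ) has at most one critical point in (0, 1): if the derivative of τ ↦ C(P, τ, Γ) vanishes at τ₁ ∈ (0,1) and at τ₂ ∈ (0,1), then τ₁ = τ₂. -/
/-- Auxiliary function whose sign determines the derivative. -/
noncomputable def Faux (a x : ℝ) : ℝ := Real.log (a + x) - x / (a + x)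

lemma Faux_hasDerivAt (a : ℝ) {x : ℝ} (hx : 0 < a + x) :
    HasDerivAt (Faux a) (x / (a + x) ^ 2) x := by
  have h1 : HasDerivAt (fun y : ℝ => a + y) 1 x := by
    simpa using (hasDerivAt_id x).const_add a
  have hlog : HasDerivAt (fun y : ℝ => Real.log (a + y)) (1 / (a + x)) x := by
    simpa using h1.log hx.ne'
  have hdiv : HasDerivAt (fun y : ℝ => y / (a + y))
      ((1 * (a + x) - x * 1) / (a + x) ^ 2) x :=
    (hasDerivAt_id x).div h1 hx.ne'
  have : HasDerivAt (Faux a) (1 / (a + x) - (1 * (a + x) - x * 1) / (a + x) ^ 2) x :=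
    hlog.sub hdiv
  convert this using 1
  field_simp
  ring

lemma Faux_strictMonoOn (a K : ℝ) (hK : 0 < K) (haK : 0 < a + K) :
    StrictMonoOn (Faux a) (Set.Ici K) := by
  apply strictMonoOn_of_deriv_pos (convex_Ici K)
  · intro x hx
    have hle : K ≤ x := hx
    have hx' : 0 < a + x := by linarith
    exact (Faux_hasDerivAt a hx').differentiableAt.continuousAt.continuousWithinAt
  · intro x hx
    rw [interior_Ici] at hx
    have hlt : K < x := hx
    have hx' : 0 < a + x := by linarith
    rw [(Faux_hasDerivAt a hx').deriv]
    have hxpos : 0 < x := lt_of_le_of_lt hK.le hlt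
    positivity

/-- For `P > 0` and `Γ > 0`, the map `τ ↦ C(P, τ, Γ)` has at most one
critical point in `(0, 1)`. -/
theorem at_most_one_critical_point_tau
    (h gA gB NA NB ζ : ℝ)
    (hh : 0 < h) (hgA : 0 ≤ gA) (hgB : 0 ≤ gB)
    (hNA : 0 < NA) (hNB : 0 < NB) (hζ : 0 < ζ) (hζ1 : ζ ≤ 1)
    (P Γ : ℝ) (hP : 0 < P) (hΓ : 0 < Γ) :
    ∀ τ₁ ∈ Set.Ioo (0:ℝ) 1, ∀ τ₂ ∈ Set.Ioo (0:ℝ) 1,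
      deriv (fun τ => C h gA gB NA NB ζ P τ Γ) τ₁ = 0 →
      deriv (fun τ => C h gA gB NA NB ζ P τ Γ) τ₂ = 0 →
      τ₁ = τ₂ := by
  intro τ₁ hτ₁ τ₂ hτ₂ hd₁ hd₂
  obtain ⟨A, hAdef⟩ : ∃ x : ℝ, x = ζ * (Γ * gA + NA) := ⟨_, rfl⟩
  obtain ⟨B, hBdef⟩ : ∃ x : ℝ, x = Γ * gB + NB := ⟨_, rfl⟩
  have hApos : 0 < A := by rw [hAdef]; positivity
  have hBpos : 0 < B := by rw [hBdef]; positivity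
  obtain ⟨a, hadef⟩ : ∃ x : ℝ, x = 1 - h * A / B := ⟨_, rfl⟩
  obtain ⟨K, hKdef⟩ : ∃ x : ℝ, x = h * (P + A) / B := ⟨_, rfl⟩
  have hKpos : 0 < K := by rw [hKdef]; positivity
  have haKpos : 0 < a + K := by
    have : a + K = 1 + h * P / B := by
      rw [hadef, hKdef]; field_simp; ring
    rw [this]; positivity
  -- key derivative computation
  have key : ∀ τ ∈ Set.Ioo (0:ℝ) 1,
      deriv (fun τ => C h gA gB NA NB ζ P τ Γ) τ
        = -(1/2) * Faux a (K / (1 - τ)) := by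
    intro τ hτ
    obtain ⟨hτ0, hτ1⟩ := hτ
    have hs : 0 < 1 - τ := by linarith
    have hKle : K ≤ K / (1 - τ) := by
      rw [le_div_iff₀ hs]; nlinarith
    have hg : 0 < a + K / (1 - τ) := by linarith
    have heq : (fun τ => C h gA gB NA NB ζ P τ Γ)
        =ᶠ[nhds τ] fun x => ((1 - x) / 2) * Real.log (a + K * (1 - x)⁻¹) := by
      have hopen : IsOpen {x : ℝ | x ≠ 1} := isOpen_ne
      filter_upwards [hopen.mem_nhds (by simpa using hτ1.ne)] with x hx
      have hx1 : (1 : ℝ) - x ≠ 0 := by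
        intro hc; apply hx; linarith
      unfold C
      have harg : 1 + ((P / (1 - x) + (x / (1 - x)) * ζ * (Γ * gA + NA)) * h)
            / (Γ * gB + NB) = a + K * (1 - x)⁻¹ := by
        rw [hadef, hKdef, hAdef, hBdef]
        field_simp
        ring
      rw [harg]
    rw [heq.deriv_eq]
    have h1 : HasDerivAt (fun x : ℝ => 1 - x) (-1) τ := by
      simpa using (hasDerivAt_id τ).const_sub 1
    have hinv : HasDerivAt (fun x : ℝ => (1 - x)⁻¹) (-(-1) / (1 - τ) ^ 2) τ :=
      h1.inv hs.ne'
    have hgd : HasDerivAt (fun x : ℝ => a + K * (1 - x)⁻¹)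
        (K * (-(-1) / (1 - τ) ^ 2)) τ := (hinv.const_mul K).const_add a
    have hgτ : 0 < a + K * (1 - τ)⁻¹ := by
      rwa [div_eq_mul_inv] at hg
    have hlog : HasDerivAt (fun x : ℝ => Real.log (a + K * (1 - x)⁻¹))
        ((K * (-(-1) / (1 - τ) ^ 2)) / (a + K * (1 - τ)⁻¹)) τ := hgd.log hgτ.ne'
    have hhalf : HasDerivAt (fun x : ℝ => (1 - x) / 2) (-1 / 2) τ := by
      simpa using h1.div_const 2
    have hfull : HasDerivAt (fun x : ℝ => (1 - x) / 2 * Real.log (a + K * (1 - x)⁻¹)) (-1 / 2 * Real.log (a + K * (1 - τ)⁻¹) + (1 - τ) / 2 * (K * (-(-1) / (1 - τ) ^ 2) / (a + K * (1 - τ)⁻¹))) τ := hhalf.mul hlog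
    rw [hfull.deriv]
    unfold Faux
    rw [div_eq_mul_inv K (1 - τ)]
    have hgne : a + K * (1 - τ)⁻¹ ≠ 0 := hgτ.ne'
    have hsne : (1:ℝ) - τ ≠ 0 := hs.ne'
    generalize a + K * (1 - τ)⁻¹ = G at hgne ⊢
    field_simp
    ring
  -- conclude
  have hmono := Faux_strictMonoOn a K hKpos haKpos
  have hx : ∀ τ ∈ Set.Ioo (0:ℝ) 1, K / (1 - τ) ∈ Set.Ici K := by
    intro τ hτ
    obtain ⟨hτ0, hτ1⟩ := hτ
    have hs : 0 < 1 - τ := by linarith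
    have : K ≤ K / (1 - τ) := by
      rw [le_div_iff₀ hs]; nlinarith
    exact this
  have hF1 : Faux a (K / (1 - τ₁)) = 0 := by
    have := key τ₁ hτ₁
    rw [hd₁] at this
    linarith [this]
  have hF2 : Faux a (K / (1 - τ₂)) = 0 := by
    have := key τ₂ hτ₂
    rw [hd₂] at this
    linarith [this]
  have hxx : K / (1 - τ₁) = K / (1 - τ₂) :=
    hmono.injOn (hx τ₁ hτ₁) (hx τ₂ hτ₂) (by rw [hF1, hF2])
  have hs₁ : (0:ℝ) < 1 - τ₁ := by linarith [hτ₁.2]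
  have hs₂ : (0:ℝ) < 1 - τ₂ := by linarith [hτ₂.2]
  have : 1 - τ₁ = 1 - τ₂ := by
    field_simp at hxx
    linarith
  linarith
end

section
/- Assume g_A > 0, g_B > 0 and g_A·N_B > g_B·N_A. Consider the no-jamming capacity along the neutralization threshold, f(τ) = C(τ·K, τ, 0) = ((1 − τ)/2)·log(1 + τ·(K + ζ·N_A)·h/((1 − τ)·N_B)), where K = ζ·(g_A·N_B/g_B − N_A). Then there exists a unique τ̂ ∈ (0, 1) at which the derivative of f vanishes, and τ̂ is the unique maximizer of f over [0, 1). -/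
open Real Filter Set in
/-- Auxiliary: the capacity along the threshold in simplified form. -/
noncomputable def Gfun (a τ : ℝ) : ℝ :=
  ((1 - τ) / 2) * (Real.log (1 + (a - 1) * τ) - Real.log (1 - τ))

/-- Auxiliary: `deriv (Gfun a) = -(1/2) * psi a`. -/
noncomputable def psi (a τ : ℝ) : ℝ :=
  Real.log (1 + (a - 1) * τ) - Real.log (1 - τ) + (1 - τ) * (1 - a) / (1 + (a - 1) * τ) - 1

lemma hasDerivAt_Gfun {a τ : ℝ} (h1 : 0 < 1 - τ) (h2 : 0 < 1 + (a - 1) * τ) :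
    HasDerivAt (Gfun a) (-(1 / 2) * psi a τ) τ := by
  have hA : (1 + (a - 1) * τ) ≠ 0 := h2.ne'
  have hB : (1 - τ) ≠ 0 := h1.ne'
  have d1 : HasDerivAt (fun τ : ℝ => 1 + (a - 1) * τ) (a - 1) τ := by
    simpa using (hasDerivAt_id τ).const_mul (a - 1) |>.const_add 1
  have d2 : HasDerivAt (fun τ : ℝ => 1 - τ) (-1) τ := by
    exact (hasDerivAt_id' τ).const_sub 1
  have dl1 := d1.log hA
  have dl2 := d2.log hB
  have dfirst : HasDerivAt (fun τ : ℝ => (1 - τ) / 2) (-1 / 2) τ := by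
    simpa using d2.div_const 2
  have := dfirst.mul (dl1.sub dl2)
  refine this.congr_deriv ?_
  unfold psi
  simp only [Pi.sub_apply]
  field_simp
  ring

lemma hasDerivAt_psi {a τ : ℝ} (h1 : 0 < 1 - τ) (h2 : 0 < 1 + (a - 1) * τ) :
    HasDerivAt (psi a) (a ^ 2 / ((1 + (a - 1) * τ) ^ 2 * (1 - τ))) τ := by
  have hA : (1 + (a - 1) * τ) ≠ 0 := h2.ne'
  have hB : (1 - τ) ≠ 0 := h1.ne'
  have d1 : HasDerivAt (fun τ : ℝ => 1 + (a - 1) * τ) (a - 1) τ := by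
    simpa using (hasDerivAt_id τ).const_mul (a - 1) |>.const_add 1
  have d2 : HasDerivAt (fun τ : ℝ => 1 - τ) (-1) τ := by
    exact (hasDerivAt_id' τ).const_sub 1
  have dl1 := d1.log hA
  have dl2 := d2.log hB
  have dq : HasDerivAt (fun τ : ℝ => (1 - τ) * (1 - a) / (1 + (a - 1) * τ))
      (((-1 * (1 - a)) * (1 + (a - 1) * τ) - (1 - τ) * (1 - a) * (a - 1)) /
        (1 + (a - 1) * τ) ^ 2) τ := (d2.mul_const (1 - a)).div d1 hA
  have := ((dl1.sub dl2).add dq).sub_const 1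
  refine this.congr_deriv ?_
  field_simp
  ring

lemma C_eq_Gfun (h gA gB NA NB ζ : ℝ) (hh : 0 < h) (hgA : 0 < gA) (hgB : 0 < gB)
    (hNB : 0 < NB) (hζ : 0 < ζ) {τ : ℝ} (h0 : 0 ≤ τ) (h1 : τ < 1) :
    C h gA gB NA NB ζ (τ * (ζ * (gA * NB / gB - NA))) τ 0 = Gfun (ζ * gA * h / gB) τ := by
  have hB : (0:ℝ) < 1 - τ := by linarith
  have ha : 0 < ζ * gA * h / gB := by positivity
  have hA : (0:ℝ) < 1 + (ζ * gA * h / gB - 1) * τ := by nlinarith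
  unfold C Gfun
  rw [show (1 + ((τ * (ζ * (gA * NB / gB - NA)) / (1 - τ) + τ / (1 - τ) * ζ * (0 * gA + NA)) * h)
        / (0 * gB + NB)) = (1 + (ζ * gA * h / gB - 1) * τ) / (1 - τ) by
    field_simp
    ring]
  rw [Real.log_div hA.ne' hB.ne']

/-- Assume `g_A > 0`, `g_B > 0` and `g_A·N_B > g_B·N_A`. Along the
neutralization threshold, with `K = ζ·(g_A·N_B/g_B − N_A)`, the no-jamming capacity
`f(τ) = C(τ·K, τ, 0)` has a unique critical point `τ̂ ∈ (0, 1)`, and `τ̂` is the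
unique maximizer of `f` over `[0, 1)`. -/
theorem exists_unique_tau_hat_NJ
    (h gA gB NA NB ζ : ℝ)
    (hh : 0 < h) (hgA : 0 ≤ gA) (hgB : 0 ≤ gB)
    (hNA : 0 < NA) (hNB : 0 < NB) (hζ : 0 < ζ) (hζ1 : ζ ≤ 1)
    (hgA' : 0 < gA) (hgB' : 0 < gB) (hlink : gA * NB > gB * NA) :
    ∃ τh ∈ Set.Ioo (0:ℝ) 1,
      deriv (fun τ => C h gA gB NA NB ζ (τ * (ζ * (gA * NB / gB - NA))) τ 0) τh = 0 ∧
      (∀ τ ∈ Set.Ioo (0:ℝ) 1,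
        deriv (fun τ' => C h gA gB NA NB ζ (τ' * (ζ * (gA * NB / gB - NA))) τ' 0) τ = 0 →
        τ = τh) ∧
      (∀ τ ∈ Set.Ico (0:ℝ) 1, τ ≠ τh →
        C h gA gB NA NB ζ (τ * (ζ * (gA * NB / gB - NA))) τ 0 <
          C h gA gB NA NB ζ (τh * (ζ * (gA * NB / gB - NA))) τh 0) := by
  classical
  open Real Filter Set in
  set a : ℝ := ζ * gA * h / gB with ha_def
  have ha : 0 < a := by positivity
  -- positivity of the log numerator on [0,1)
  have hApos : ∀ τ : ℝ, 0 ≤ τ → τ < 1 → 0 < 1 + (a - 1) * τ := by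
    intro τ h0 h1; nlinarith
  have hFG : ∀ τ : ℝ, 0 ≤ τ → τ < 1 →
      C h gA gB NA NB ζ (τ * (ζ * (gA * NB / gB - NA))) τ 0 = Gfun a τ := fun τ h0 h1 =>
    C_eq_Gfun h gA gB NA NB ζ hh hgA' hgB' hNB hζ h0 h1
  -- derivative of the capacity function on (0,1)
  have hderivF : ∀ τ ∈ Set.Ioo (0:ℝ) 1,
      deriv (fun τ' => C h gA gB NA NB ζ (τ' * (ζ * (gA * NB / gB - NA))) τ' 0) τ
        = -(1 / 2) * psi a τ := by
    intro τ hτ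
    have heq : (fun τ' => C h gA gB NA NB ζ (τ' * (ζ * (gA * NB / gB - NA))) τ' 0)
        =ᶠ[nhds τ] Gfun a := by
      filter_upwards [isOpen_Ioo.mem_nhds hτ] with x hx
      exact hFG x hx.1.le hx.2
    rw [heq.deriv_eq,
      (hasDerivAt_Gfun (by linarith [hτ.2] : (0:ℝ) < 1 - τ)
        (hApos τ hτ.1.le hτ.2)).deriv]
  -- psi is strictly monotone on [0,1)
  have hψcont : ContinuousOn (psi a) (Set.Ico 0 1) := by
    intro x hx
    exact (hasDerivAt_psi (by linarith [hx.2] : (0:ℝ) < 1 - x)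
      (hApos x hx.1 hx.2)).continuousAt.continuousWithinAt
  have hψmono : StrictMonoOn (psi a) (Set.Ico 0 1) := by
    apply strictMonoOn_of_deriv_pos (convex_Ico 0 1) hψcont
    rw [interior_Ico]
    intro x hx
    rw [(hasDerivAt_psi (by linarith [hx.2] : (0:ℝ) < 1 - x)
      (hApos x hx.1.le hx.2)).deriv]
    have h1 : (0:ℝ) < 1 - x := by linarith [hx.2]
    have h2 := hApos x hx.1.le hx.2
    positivity
  have hψ0 : psi a 0 = -a := by
    unfold psi; simp
  -- psi tends to +∞ at 1⁻
  have tψ : Filter.Tendsto (psi a) (nhdsWithin 1 (Set.Iio 1)) Filter.atTop := by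
    have hmap : Filter.Tendsto (fun τ : ℝ => 1 - τ) (nhdsWithin 1 (Set.Iio 1))
        (nhdsWithin 0 (Set.Ioi 0)) := by
      apply tendsto_nhdsWithin_of_tendsto_nhds_of_eventually_within
      · have hc : Continuous fun τ : ℝ => 1 - τ := by continuity
        simpa using (hc.tendsto 1).mono_left nhdsWithin_le_nhds
      · filter_upwards [self_mem_nhdsWithin] with x hx
        simp only [Set.mem_Iio] at hx
        simp only [Set.mem_Ioi]
        linarith
    have tlog : Filter.Tendsto (fun τ : ℝ => Real.log (1 - τ))
        (nhdsWithin 1 (Set.Iio 1)) Filter.atBot :=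
      Real.tendsto_log_nhdsGT_zero.comp hmap
    have tneg : Filter.Tendsto (fun τ : ℝ => -Real.log (1 - τ))
        (nhdsWithin 1 (Set.Iio 1)) Filter.atTop := tendsto_neg_atBot_atTop.comp tlog
    have hne : (1:ℝ) + (a - 1) * 1 ≠ 0 := by
      have : (1:ℝ) + (a - 1) * 1 = a := by ring
      rw [this]; exact ha.ne'
    have hcA : ContinuousAt (fun τ : ℝ => 1 + (a - 1) * τ) 1 := by fun_prop
    have trest : Filter.Tendsto
        (fun τ : ℝ => Real.log (1 + (a - 1) * τ) + ((1 - τ) * (1 - a) / (1 + (a - 1) * τ) - 1))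
        (nhdsWithin 1 (Set.Iio 1))
        (nhds (Real.log (1 + (a - 1) * 1) + ((1 - 1) * (1 - a) / (1 + (a - 1) * 1) - 1))) := by
      apply Filter.Tendsto.mono_left _ nhdsWithin_le_nhds
      apply ContinuousAt.tendsto
      have hq : ContinuousAt (fun τ : ℝ => (1 - τ) * (1 - a) / (1 + (a - 1) * τ)) 1 :=
        ContinuousAt.div (by fun_prop) hcA hne
      exact (hcA.log hne).add (hq.sub continuousAt_const)
    have := trest.add_atTop tneg
    refine this.congr fun x => ?_
    unfold psi; ring
  -- find a point where psi is positive
  have hex : ∃ τ₁ ∈ Set.Ioo (0:ℝ) 1, 1 ≤ psi a τ₁ := by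
    have h1 : ∀ᶠ τ in nhdsWithin 1 (Set.Iio 1), 1 ≤ psi a τ := tψ.eventually_ge_atTop 1
    have h2 : Set.Ioo (0:ℝ) 1 ∈ nhdsWithin 1 (Set.Iio (1:ℝ)) :=
      Ioo_mem_nhdsLT_of_mem (by norm_num : (1:ℝ) ∈ Set.Ioc (0:ℝ) 1)
    rcases (h1.and (Filter.eventually_iff_exists_mem.mpr ⟨_, h2, fun x hx => hx⟩)).exists with
      ⟨τ₁, hτ₁⟩
    exact ⟨τ₁, hτ₁.2, hτ₁.1⟩
  obtain ⟨τ₁, hτ₁mem, hτ₁pos⟩ := hex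
  -- IVT gives the critical point
  have hsub : Set.Ioo (psi a 0) (psi a τ₁) ⊆ psi a '' Set.Ioo 0 τ₁ :=
    intermediate_value_Ioo hτ₁mem.1.le
      (hψcont.mono (Set.Icc_subset_Ico_right hτ₁mem.2))
  have h0mem : (0:ℝ) ∈ Set.Ioo (psi a 0) (psi a τ₁) := by
    rw [hψ0]; constructor <;> [linarith; linarith]
  obtain ⟨τh, hτhmem, hψτh⟩ := hsub h0mem
  have hτh01 : τh ∈ Set.Ioo (0:ℝ) 1 := ⟨hτhmem.1, lt_trans hτhmem.2 hτ₁mem.2⟩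
  refine ⟨τh, hτh01, ?_, ?_, ?_⟩
  · rw [hderivF τh hτh01, hψτh]; ring
  · intro τ hτ hd
    rw [hderivF τ hτ] at hd
    have hψτ : psi a τ = 0 := by linarith
    exact hψmono.injOn ⟨hτ.1.le, hτ.2⟩ ⟨hτh01.1.le, hτh01.2⟩ (by rw [hψτ, hψτh])
  · intro τ hτ hne
    rw [hFG τ hτ.1 hτ.2, hFG τh hτh01.1.le hτh01.2]
    rcases lt_or_gt_of_ne hne with hlt | hgt
    · -- τ < τh : Gfun strictly increasing on [0, τh]
      have hmono : StrictMonoOn (Gfun a) (Set.Icc 0 τh) := by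
        apply strictMonoOn_of_deriv_pos (convex_Icc 0 τh)
        · intro x hx
          have hx1 : x < 1 := lt_of_le_of_lt hx.2 hτh01.2
          exact (hasDerivAt_Gfun (by linarith : (0:ℝ) < 1 - x)
            (hApos x hx.1 hx1)).continuousAt.continuousWithinAt
        · rw [interior_Icc]
          intro x hx
          have hx1 : x < 1 := lt_trans hx.2 hτh01.2
          rw [(hasDerivAt_Gfun (by linarith : (0:ℝ) < 1 - x) (hApos x hx.1.le hx1)).deriv]
          have : psi a x < psi a τh :=
            hψmono ⟨hx.1.le, hx1⟩ ⟨hτh01.1.le, hτh01.2⟩ hx.2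
          rw [hψτh] at this
          linarith
      exact hmono ⟨hτ.1, hlt.le⟩ ⟨hτh01.1.le, le_refl _⟩ hlt
    · -- τh < τ : Gfun strictly decreasing on [τh, τ]
      have hanti : StrictAntiOn (Gfun a) (Set.Icc τh τ) := by
        apply strictAntiOn_of_deriv_neg (convex_Icc τh τ)
        · intro x hx
          have hx0 : 0 ≤ x := le_trans hτh01.1.le hx.1
          have hx1 : x < 1 := lt_of_le_of_lt hx.2 hτ.2
          exact (hasDerivAt_Gfun (by linarith : (0:ℝ) < 1 - x)
            (hApos x hx0 hx1)).continuousAt.continuousWithinAt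
        · rw [interior_Icc]
          intro x hx
          have hx0 : 0 ≤ x := le_of_lt (lt_trans hτh01.1 hx.1)
          have hx1 : x < 1 := lt_trans hx.2 hτ.2
          rw [(hasDerivAt_Gfun (by linarith : (0:ℝ) < 1 - x) (hApos x hx0 hx1)).deriv]
          have : psi a τh < psi a x :=
            hψmono ⟨hτh01.1.le, hτh01.2⟩ ⟨hx0, hx1⟩ hx.1
          rw [hψτh] at this
          linarith
      exact hanti ⟨le_refl _, hgt.le⟩ ⟨hgt.le, le_refl _⟩ hgt
end

section
/- Assume g_A > 0, g_B > 0, g_A·N_B > g_B·N_A, and let P > 0 be the maximum transmit power with K < P (equivalently p_th⁻¹(P) = P/K > 1), where K = ζ·(g_A·N_B/g_B − N_A). Let τ̂ ∈ (0,1) be the unique critical point of τ ↦ C(τ·K, τ, 0). Then (p, τ) = (τ̂·K, τ̂) maximizes C(p, τ, 0) over the jammer-neutralizing feasible set {(p, τ) : τ ∈ [0,1), 0 ≤ p ≤ min(P, τ·K)}: for all feasible (p, τ), C(p, τ, 0) ≤ C(τ̂·K, τ̂, 0). -/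
open Set in

noncomputable def phiF (A τ : ℝ) : ℝ := ((1 - τ)/2) * Real.log (1 + A*τ/(1-τ))
noncomputable def LF (A τ : ℝ) : ℝ := (A/(1+(A-1)*τ) - Real.log (1 + A*τ/(1-τ)))/2

lemma hasDerivAt_phi {A : ℝ} (hA : 0 < A) {x : ℝ} (hx0 : 0 ≤ x) (hx1 : x < 1) :
    HasDerivAt (phiF A) (LF A x) x := by
  have hu : (0:ℝ) < 1 - x := by linarith
  have hD : (0:ℝ) < 1 + (A-1)*x := by nlinarith
  have hgx : 1 + A*(x/(1-x)) = (1+(A-1)*x)/(1-x) := by field_simp; ring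
  have hgpos : 0 < 1 + A*(x/(1-x)) := by rw [hgx]; positivity
  have hinner : HasDerivAt (fun τ : ℝ => 1 + A*(τ/(1-τ))) (A * (1/(1-x)^2)) x := by
    have h1 : HasDerivAt (fun τ : ℝ => τ/(1-τ)) (1/(1-x)^2) x := by
      have : HasDerivAt (fun τ : ℝ => τ/(1-τ)) ((1 * (1 - x) - x * (0 - 1)) / (1 - x) ^ 2) x :=
        (hasDerivAt_id x).div ((hasDerivAt_const x (1:ℝ)).sub (hasDerivAt_id x)) hu.ne'
      convert this using 1
      field_simp
      ring
    exact (h1.const_mul A).const_add 1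
  have hlog : HasDerivAt (fun τ : ℝ => Real.log (1 + A*(τ/(1-τ))))
      ((1 + A*(x/(1-x)))⁻¹ * (A * (1/(1-x)^2))) x :=
    by have := (Real.hasDerivAt_log hgpos.ne').comp x hinner; exact this
  have hpre : HasDerivAt (fun τ : ℝ => (1-τ)/2) ((0-1)/2) x :=
    ((hasDerivAt_const x (1:ℝ)).sub (hasDerivAt_id x)).div_const 2
  have hmul : HasDerivAt (fun τ : ℝ => (1-τ)/2 * Real.log (1 + A*(τ/(1-τ)))) _ x := hpre.mul hlog
  have heq : (fun τ : ℝ => (1-τ)/2 * Real.log (1 + A*(τ/(1-τ)))) = phiF A := by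
    funext τ; simp [phiF, mul_div_assoc]
  rw [heq] at hmul
  convert hmul using 1
  rw [LF, show A*x/(1-x) = A*(x/(1-x)) by ring, hgx,
    show Real.log ((1+(A-1)*x)/(1-x)) = Real.log (1 + A*(x/(1-x))) by rw [hgx]]
  field_simp
  ring

lemma hasDerivAt_L {A : ℝ} (hA : 0 < A) {x : ℝ} (hx0 : 0 ≤ x) (hx1 : x < 1) :
    HasDerivAt (LF A) (-(A^2)/(2*(1-x)*(1+(A-1)*x)^2)) x := by
  have hu : (0:ℝ) < 1 - x := by linarith
  have hD : (0:ℝ) < 1 + (A-1)*x := by nlinarith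
  have hgx : 1 + A*(x/(1-x)) = (1+(A-1)*x)/(1-x) := by field_simp; ring
  have hgpos : 0 < 1 + A*(x/(1-x)) := by rw [hgx]; positivity
  have hinner : HasDerivAt (fun τ : ℝ => 1 + A*(τ/(1-τ))) (A * (1/(1-x)^2)) x := by
    have h1 : HasDerivAt (fun τ : ℝ => τ/(1-τ)) (1/(1-x)^2) x := by
      have : HasDerivAt (fun τ : ℝ => τ/(1-τ)) ((1 * (1 - x) - x * (0 - 1)) / (1 - x) ^ 2) x :=
        (hasDerivAt_id x).div ((hasDerivAt_const x (1:ℝ)).sub (hasDerivAt_id x)) hu.ne'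
      convert this using 1
      field_simp
      ring
    exact (h1.const_mul A).const_add 1
  have hlog : HasDerivAt (fun τ : ℝ => Real.log (1 + A*(τ/(1-τ))))
      ((1 + A*(x/(1-x)))⁻¹ * (A * (1/(1-x)^2))) x :=
    by have := (Real.hasDerivAt_log hgpos.ne').comp x hinner; exact this
  have hdiv : HasDerivAt (fun τ : ℝ => A/(1+(A-1)*τ))
      ((0 * (1+(A-1)*x) - A*(A-1))/(1+(A-1)*x)^2) x := by
    have hden : HasDerivAt (fun τ : ℝ => 1+(A-1)*τ) (A-1) x := by
      simpa using ((hasDerivAt_id x).const_mul (A-1)).const_add 1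
    exact (hasDerivAt_const x A).div hden hD.ne'
  have hsum : HasDerivAt (fun τ : ℝ => (A/(1+(A-1)*τ) - Real.log (1 + A*(τ/(1-τ))))/2) _ x :=
    (hdiv.sub hlog).div_const 2
  have heq : (fun τ : ℝ => (A/(1+(A-1)*τ) - Real.log (1 + A*(τ/(1-τ))))/2) = LF A := by
    funext τ; simp [LF, mul_div_assoc]
  rw [heq] at hsum
  convert hsum using 1
  rw [hgx]
  field_simp
  ring

lemma phi_le_max {A : ℝ} (hA : 0 < A) {τh : ℝ} (hτh : τh ∈ Set.Ioo (0:ℝ) 1)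
    (hc : deriv (phiF A) τh = 0) :
    ∀ τ ∈ Set.Ico (0:ℝ) 1, phiF A τ ≤ phiF A τh := by
  obtain ⟨hτ0, hτ1⟩ := hτh
  have hL0 : LF A τh = 0 := by
    rw [← hc, (hasDerivAt_phi hA hτ0.le hτ1).deriv]
  have hanti : StrictAntiOn (LF A) (Set.Ico 0 1) := by
    apply strictAntiOn_of_deriv_neg (convex_Ico 0 1)
    · intro x hx
      exact (hasDerivAt_L hA hx.1 hx.2).continuousAt.continuousWithinAt
    · intro x hx
      rw [interior_Ico] at hx
      rw [(hasDerivAt_L hA hx.1.le hx.2).deriv]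
      have h1 : (0:ℝ) < 1 - x := by linarith [hx.2]
      have h2 : (0:ℝ) < 1 + (A-1)*x := by nlinarith [hx.1, hx.2]
      exact div_neg_of_neg_of_pos (neg_lt_zero.mpr (by positivity)) (by positivity)
  have hmono : MonotoneOn (phiF A) (Set.Icc 0 τh) := by
    apply monotoneOn_of_deriv_nonneg (convex_Icc 0 τh)
    · intro x hx
      exact (hasDerivAt_phi hA hx.1 (lt_of_le_of_lt hx.2 hτ1)).continuousAt.continuousWithinAt
    · intro x hx
      rw [interior_Icc] at hx
      exact (hasDerivAt_phi hA hx.1.le (hx.2.trans hτ1)).differentiableAt.differentiableWithinAt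
    · intro x hx
      rw [interior_Icc] at hx
      rw [(hasDerivAt_phi hA hx.1.le (hx.2.trans hτ1)).deriv]
      have := hanti ⟨hx.1.le, hx.2.trans hτ1⟩ ⟨hτ0.le, hτ1⟩ hx.2
      linarith [hL0 ▸ this]
  have hant : AntitoneOn (phiF A) (Set.Ico τh 1) := by
    apply antitoneOn_of_deriv_nonpos (convex_Ico τh 1)
    · intro x hx
      exact (hasDerivAt_phi hA (hτ0.le.trans hx.1) hx.2).continuousAt.continuousWithinAt
    · intro x hx
      rw [interior_Ico] at hx
      exact (hasDerivAt_phi hA (hτ0.le.trans hx.1.le) hx.2).differentiableAt.differentiableWithinAt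
    · intro x hx
      rw [interior_Ico] at hx
      rw [(hasDerivAt_phi hA (hτ0.le.trans hx.1.le) hx.2).deriv]
      have := hanti ⟨hτ0.le, hτ1⟩ ⟨hτ0.le.trans hx.1.le, hx.2⟩ hx.1
      linarith [hL0 ▸ this]
  intro τ hτ
  rcases le_or_gt τ τh with hle | hlt
  · exact hmono ⟨hτ.1, hle⟩ ⟨hτ0.le, le_refl _⟩ hle
  · exact hant ⟨le_refl _, hτ1⟩ ⟨hlt.le, hτ.2⟩ hlt.le

/-- Assume `g_A > 0`, `g_B > 0`, `g_A·N_B > g_B·N_A`, and `K < P` with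
`K = ζ·(g_A·N_B/g_B − N_A)`. If `τ̂ ∈ (0,1)` is the critical point of
`τ ↦ C(τ·K, τ, 0)`, then `(p, τ) = (τ̂·K, τ̂)` maximizes `C(p, τ, 0)` over the
jammer-neutralizing feasible set `{(p, τ) : τ ∈ [0,1), 0 ≤ p ≤ min(P, τ·K)}`. -/
theorem NJ_optimal_strategy_case_a
    (h gA gB NA NB ζ : ℝ)
    (hh : 0 < h) (hgA : 0 ≤ gA) (hgB : 0 ≤ gB)
    (hNA : 0 < NA) (hNB : 0 < NB) (hζ : 0 < ζ) (hζ1 : ζ ≤ 1)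
    (hgA' : 0 < gA) (hgB' : 0 < gB) (hlink : gA * NB > gB * NA)
    (P : ℝ) (hP : 0 < P) (hKP : ζ * (gA * NB / gB - NA) < P)
    (τh : ℝ) (hτh : τh ∈ Set.Ioo (0:ℝ) 1)
    (hcrit : deriv (fun τ => C h gA gB NA NB ζ (τ * (ζ * (gA * NB / gB - NA))) τ 0) τh = 0) :
    ∀ p τ : ℝ, τ ∈ Set.Ico (0:ℝ) 1 → 0 ≤ p →
      p ≤ min P (τ * (ζ * (gA * NB / gB - NA))) →
      C h gA gB NA NB ζ p τ 0 ≤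
        C h gA gB NA NB ζ (τh * (ζ * (gA * NB / gB - NA))) τh 0 := by
  set K : ℝ := ζ * (gA * NB / gB - NA) with hKdef
  set A : ℝ := ζ * gA * h / gB with hAdef
  have hA : 0 < A := by positivity
  have hKpos : 0 < K := by
    have : NA < gA * NB / gB := by
      rw [lt_div_iff₀ hgB']; linarith
    have : 0 < gA * NB / gB - NA := by linarith
    positivity
  -- the composite function equals phiF A
  have funeq : (fun τ => C h gA gB NA NB ζ (τ * K) τ 0) = phiF A := by
    funext τ
    by_cases hτ : τ = 1
    · simp [C, phiF, hτ]
    · have h1 : (1:ℝ) - τ ≠ 0 := sub_ne_zero.mpr (Ne.symm hτ)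
      unfold C phiF
      congr 1
      congr 1
      rw [hKdef, hAdef]
      field_simp
      ring
  have hc' : deriv (phiF A) τh = 0 := by rw [← funeq]; exact hcrit
  intro p τ hτ hp hple
  have hτ0 := hτ.1
  have hτ1 := hτ.2
  have hu : (0:ℝ) < 1 - τ := by linarith
  have hpK : p ≤ τ * K := le_trans hple (min_le_right _ _)
  -- step 1: monotonicity in p
  have step1 : C h gA gB NA NB ζ p τ 0 ≤ C h gA gB NA NB ζ (τ * K) τ 0 := by
    unfold C
    apply mul_le_mul_of_nonneg_left _ (by positivity)
    apply Real.log_le_log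
    · have h1 : 0 ≤ p / (1 - τ) := div_nonneg hp hu.le
      have h2 : 0 ≤ (τ / (1 - τ)) * ζ * (0 * gA + NA) := by positivity
      have : 0 ≤ ((p / (1 - τ) + (τ / (1 - τ)) * ζ * (0 * gA + NA)) * h) / (0 * gB + NB) := by
        apply div_nonneg _ (by positivity)
        exact mul_nonneg (by linarith) hh.le
      linarith
    · gcongr
  refine le_trans step1 ?_
  calc C h gA gB NA NB ζ (τ * K) τ 0 = phiF A τ := congrFun funeq τ
    _ ≤ phiF A τh := phi_le_max hA hτh hc' τ hτ
    _ = C h gA gB NA NB ζ (τh * K) τh 0 := (congrFun funeq τh).symm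
end

section
/- Fix maximum powers P > 0 and Γ > 0. If (p*, τ*, γ*) ∈ [0,P] × [0,1) × [0,Γ] is a Nash equilibrium of the zero-sum game with payoff C (i.e., C(p*, τ*, γ*) ≥ C(p, τ, γ*) for all (p, τ) ∈ [0,P] × [0,1) and C(p*, τ*, γ*) ≤ C(p*, τ*, γ) for all γ ∈ [0,Γ]), then p* = P, i.e., at any Nash equilibrium the legitimate transmitter uses full power. -/
/-- At any Nash equilibrium `(p*, τ*, γ*) ∈ [0,P] × [0,1) × [0,Γ]` of the
zero-sum game with payoff `C`, the legitimate transmitter uses full power: `p* = P`. -/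
theorem NE_full_power
    (h gA gB NA NB ζ : ℝ)
    (hh : 0 < h) (hgA : 0 ≤ gA) (hgB : 0 ≤ gB)
    (hNA : 0 < NA) (hNB : 0 < NB) (hζ : 0 < ζ) (hζ1 : ζ ≤ 1)
    (P Γ : ℝ) (hP : 0 < P) (hΓ : 0 < Γ)
    (ps τs γs : ℝ)
    (hps : ps ∈ Set.Icc 0 P) (hτs : τs ∈ Set.Ico (0:ℝ) 1) (hγs : γs ∈ Set.Icc 0 Γ)
    (hNE_L : ∀ p ∈ Set.Icc 0 P, ∀ τ ∈ Set.Ico (0:ℝ) 1,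
      C h gA gB NA NB ζ p τ γs ≤ C h gA gB NA NB ζ ps τs γs)
    (hNE_J : ∀ γ ∈ Set.Icc 0 Γ,
      C h gA gB NA NB ζ ps τs γs ≤ C h gA gB NA NB ζ ps τs γ) :
    ps = P := by
  by_contra hne
  have hpsP : ps < P := lt_of_le_of_ne hps.2 hne
  have hd : 0 < 1 - τs := by linarith [hτs.2]
  have hD : 0 < γs * gB + NB := by nlinarith [hγs.1]
  have ht : 0 ≤ (τs / (1 - τs)) * ζ * (γs * gA + NA) := by
    have : 0 ≤ τs / (1 - τs) := div_nonneg hτs.1 hd.le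
    have hA : 0 ≤ γs * gA + NA := by nlinarith [hγs.1]
    positivity
  have hA : (0:ℝ) < 1 + ((ps / (1 - τs) + (τs / (1 - τs)) * ζ * (γs * gA + NA)) * h) / (γs * gB + NB) := by
    have : 0 ≤ ps / (1 - τs) := div_nonneg hps.1 hd.le
    have : 0 ≤ (ps / (1 - τs) + (τs / (1 - τs)) * ζ * (γs * gA + NA)) * h :=
      mul_nonneg (by linarith) hh.le
    have := div_nonneg this hD.le
    linarith
  have hlt : (1 + ((ps / (1 - τs) + (τs / (1 - τs)) * ζ * (γs * gA + NA)) * h) / (γs * gB + NB))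
      < 1 + ((P / (1 - τs) + (τs / (1 - τs)) * ζ * (γs * gA + NA)) * h) / (γs * gB + NB) := by
    gcongr
  have hlog := Real.log_lt_log hA hlt
  have hC : C h gA gB NA NB ζ ps τs γs < C h gA gB NA NB ζ P τs γs := by
    unfold C
    have h2 : 0 < (1 - τs) / 2 := by linarith
    exact mul_lt_mul_of_pos_left hlog h2
  have := hNE_L P ⟨hP.le, le_refl P⟩ τs hτs
  linarith
end

section
/- Assume g_A > 0, g_B > 0, g_A·N_B > g_B·N_A, and fix maximum powers P > 0 and Γ > 0 with K < P, where K = ζ·(g_A·N_B/g_B − N_A). Let τ̂ ∈ (0,1) be the unique critical point of τ ↦ C(τ·K, τ, 0), so (τ̂·K, τ̂, 0) is the jammer-neutralizing (NJ) strategy profile. Then (τ̂·K, τ̂, 0) is NOT a Nash equilibrium of the zero-sum game: there exists a legitimate deviation (p, τ) ∈ [0,P] × [0,1) with C(p, τ, 0) > C(τ̂·K, τ̂, 0); in particular the deviation p = P, τ = τ̂ works since τ̂·K < P. -/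
/-- Assume `g_A > 0`, `g_B > 0`, `g_A·N_B > g_B·N_A`, and `K < P` with
`K = ζ·(g_A·N_B/g_B − N_A)`. Let `τ̂ ∈ (0,1)` be the critical point of
`τ ↦ C(τ·K, τ, 0)`. Then the jammer-neutralizing profile `(τ̂·K, τ̂, 0)` is not a Nash
equilibrium: there is a legitimate deviation `(p, τ) ∈ [0,P] × [0,1)` strictly improving
the capacity; in particular `p = P`, `τ = τ̂` works since `τ̂·K < P`. -/
theorem NJ_not_NE
    (h gA gB NA NB ζ : ℝ)
    (hh : 0 < h) (hgA : 0 ≤ gA) (hgB : 0 ≤ gB)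
    (hNA : 0 < NA) (hNB : 0 < NB) (hζ : 0 < ζ) (hζ1 : ζ ≤ 1)
    (hgA' : 0 < gA) (hgB' : 0 < gB) (hlink : gA * NB > gB * NA)
    (P Γ : ℝ) (hP : 0 < P) (hΓ : 0 < Γ) (hKP : ζ * (gA * NB / gB - NA) < P)
    (τh : ℝ) (hτh : τh ∈ Set.Ioo (0:ℝ) 1)
    (hcrit : deriv (fun τ => C h gA gB NA NB ζ (τ * (ζ * (gA * NB / gB - NA))) τ 0) τh = 0) :
    (∃ p ∈ Set.Icc 0 P, ∃ τ ∈ Set.Ico (0:ℝ) 1,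
      C h gA gB NA NB ζ (τh * (ζ * (gA * NB / gB - NA))) τh 0 < C h gA gB NA NB ζ p τ 0) ∧
    τh * (ζ * (gA * NB / gB - NA)) < P ∧
    C h gA gB NA NB ζ (τh * (ζ * (gA * NB / gB - NA))) τh 0 < C h gA gB NA NB ζ P τh 0 := by
  obtain ⟨hτ0, hτ1⟩ := hτh
  set K := ζ * (gA * NB / gB - NA) with hKdef
  have hK : 0 < K := by
    apply mul_pos hζ
    have : NA < gA * NB / gB := by
      rw [lt_div_iff₀ hgB']
      nlinarith [hlink]
    linarith
  have hτK : τh * K < P := by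
    have h1 : τh * K < 1 * K := mul_lt_mul_of_pos_right hτ1 hK
    have h2 : (1:ℝ) * K = K := one_mul K
    linarith
  have hs : 0 < 1 - τh := by linarith
  have hτKnn : 0 ≤ τh * K := mul_nonneg hτ0.le hK.le
  have hmain : C h gA gB NA NB ζ (τh * K) τh 0 < C h gA gB NA NB ζ P τh 0 := by
    unfold C
    have hfac : (0:ℝ) < (1 - τh) / 2 := by positivity
    apply (mul_lt_mul_iff_right₀ hfac).mpr
    apply Real.log_lt_log
    · have hx : 0 ≤ ((τh * K / (1 - τh) + (τh / (1 - τh)) * ζ * (0 * gA + NA)) * h) /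
          (0 * gB + NB) := by
        apply div_nonneg _ (by positivity)
        apply mul_nonneg _ hh.le
        apply add_nonneg (div_nonneg hτKnn hs.le)
        positivity
      linarith
    · gcongr
  exact ⟨⟨P, ⟨hP.le, le_refl P⟩, τh, ⟨hτ0.le, hτ1⟩, hmain⟩, hτK, hmain⟩
end

section
/- Assume g_B > 0 and fix maximum powers P > 0 and Γ > 0. For any jammer-neutralizing legitimate strategy, i.e., any (p, τ) ∈ [0,P] × [0,1) with p ≤ τ·K where K = ζ·(g_A·N_B/g_B − N_A), the capacity obtained by silencing the jammer is no larger than the best capacity achievable against a full-power jammer: C(p, τ, 0) ≤ sup_{(p', τ') ∈ [0,P] × [0,1)} C(p', τ', Γ). In particular, the Nash equilibrium value C(P, τ^NE, Γ) (with τ^NE the maximizer of τ ↦ C(P, τ, Γ)) is at least the best jammer-neutralizing capacity. -/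
lemma C_gamma_le (h gA gB NA NB ζ p τ Γ : ℝ)
    (hh : 0 < h) (hgA : 0 ≤ gA) (hNA : 0 < NA) (hNB : 0 < NB) (hζ : 0 < ζ)
    (hgB' : 0 < gB) (hΓ : 0 < Γ) (hp0 : 0 ≤ p) (hτ0 : 0 ≤ τ) (hτ1 : τ < 1)
    (hpth : p ≤ τ * (ζ * (gA * NB / gB - NA))) :
    C h gA gB NA NB ζ p τ 0 ≤ C h gA gB NA NB ζ p τ Γ := by
  have ht : 0 < 1 - τ := by linarith
  have key : p * gB ≤ τ * ζ * (gA * NB - NA * gB) := by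
    have := mul_le_mul_of_nonneg_right hpth hgB'.le
    field_simp at this
    nlinarith [this]
  unfold C
  have hden1 : (0:ℝ) < (0:ℝ) * gB + NB := by simpa using hNB
  have hden2 : (0:ℝ) < Γ * gB + NB := by positivity
  apply mul_le_mul_of_nonneg_left _ (by positivity)
  apply Real.log_le_log
  · have : 0 ≤ ((p / (1 - τ) + τ / (1 - τ) * ζ * (0 * gA + NA)) * h) / (0 * gB + NB) := by
      positivity
    linarith
  · apply add_le_add_right
    rw [div_le_div_iff₀ hden1 hden2]
    have hne : (1 - τ) ≠ 0 := ne_of_gt ht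
    field_simp
    nlinarith [mul_le_mul_of_nonneg_right key (mul_pos hΓ (mul_pos hh ht)).le, mul_le_mul_of_nonneg_right key hΓ.le]

lemma C_p_mono (h gA gB NA NB ζ p p' τ γ : ℝ)
    (hh : 0 < h) (hgA : 0 ≤ gA) (hgB : 0 ≤ gB) (hNA : 0 < NA) (hNB : 0 < NB)
    (hζ : 0 < ζ) (hγ : 0 ≤ γ) (hp0 : 0 ≤ p) (hpp : p ≤ p') (hτ0 : 0 ≤ τ) (hτ1 : τ < 1) :
    C h gA gB NA NB ζ p τ γ ≤ C h gA gB NA NB ζ p' τ γ := by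
  have ht : 0 < 1 - τ := by linarith
  unfold C
  have hden : (0:ℝ) < γ * gB + NB := by positivity
  apply mul_le_mul_of_nonneg_left _ (by positivity)
  apply Real.log_le_log
  · have : 0 ≤ ((p / (1 - τ) + τ / (1 - τ) * ζ * (γ * gA + NA)) * h) / (γ * gB + NB) := by
      positivity
    linarith
  · gcongr

lemma C_bdd (h gA gB NA NB ζ P Γ : ℝ)
    (hh : 0 < h) (hgA : 0 ≤ gA) (hgB : 0 ≤ gB) (hNA : 0 < NA) (hNB : 0 < NB)
    (hζ : 0 < ζ) (hΓ : 0 ≤ Γ) (hP : 0 ≤ P) :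
    BddAbove {c : ℝ | ∃ p' ∈ Set.Icc 0 P, ∃ τ' ∈ Set.Ico (0:ℝ) 1,
        c = C h gA gB NA NB ζ p' τ' Γ} := by
  refine ⟨(P + ζ * (Γ * gA + NA)) * h / (2 * (Γ * gB + NB)), ?_⟩
  rintro c ⟨p', ⟨hp0, hpP⟩, τ', ⟨hτ0, hτ1⟩, rfl⟩
  have ht : 0 < 1 - τ' := by linarith
  have hden : (0:ℝ) < Γ * gB + NB := by positivity
  unfold C
  have harg : 0 ≤ ((p' / (1 - τ') + τ' / (1 - τ') * ζ * (Γ * gA + NA)) * h) / (Γ * gB + NB) := by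
    positivity
  have hlog := Real.log_le_sub_one_of_pos (show (0:ℝ) < 1 + ((p' / (1 - τ') + τ' / (1 - τ') * ζ * (Γ * gA + NA)) * h) / (Γ * gB + NB) by linarith)
  calc ((1 - τ') / 2) * Real.log (1 + ((p' / (1 - τ') + τ' / (1 - τ') * ζ * (Γ * gA + NA)) * h) / (Γ * gB + NB))
      ≤ ((1 - τ') / 2) * (((p' / (1 - τ') + τ' / (1 - τ') * ζ * (Γ * gA + NA)) * h) / (Γ * gB + NB)) := by
        apply mul_le_mul_of_nonneg_left _ (by positivity); linarith
    _ = (p' + τ' * ζ * (Γ * gA + NA)) * h / (2 * (Γ * gB + NB)) := by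
        field_simp
    _ ≤ (P + ζ * (Γ * gA + NA)) * h / (2 * (Γ * gB + NB)) := by
        gcongr ?_ * h / (2 * (Γ * gB + NB))
        nlinarith [mul_nonneg (mul_nonneg ht.le hζ.le) (by positivity : (0:ℝ) ≤ Γ * gA + NA)]

/-- Assume `g_B > 0`, `P > 0`, `Γ > 0`, and let
`K = ζ·(g_A·N_B/g_B − N_A)`. For any jammer-neutralizing legitimate strategy
(`(p, τ) ∈ [0,P] × [0,1)` with `p ≤ τ·K`), the capacity obtained by silencing the
jammer is no larger than the best capacity achievable against a full-power jammer;
in particular the Nash equilibrium value `C(P, τ^NE, Γ)` is at least the best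
jammer-neutralizing capacity. -/
theorem NE_outperforms_NJ
    (h gA gB NA NB ζ : ℝ)
    (hh : 0 < h) (hgA : 0 ≤ gA) (hgB : 0 ≤ gB)
    (hNA : 0 < NA) (hNB : 0 < NB) (hζ : 0 < ζ) (hζ1 : ζ ≤ 1)
    (hgB' : 0 < gB) (P Γ : ℝ) (hP : 0 < P) (hΓ : 0 < Γ)
    (p τ : ℝ) (hp : p ∈ Set.Icc 0 P) (hτ : τ ∈ Set.Ico (0:ℝ) 1)
    (hpth : p ≤ τ * (ζ * (gA * NB / gB - NA))) :
    C h gA gB NA NB ζ p τ 0 ≤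
      sSup {c : ℝ | ∃ p' ∈ Set.Icc 0 P, ∃ τ' ∈ Set.Ico (0:ℝ) 1,
        c = C h gA gB NA NB ζ p' τ' Γ} ∧
    ∀ τNE ∈ Set.Ico (0:ℝ) 1,
      (∀ τ' ∈ Set.Ico (0:ℝ) 1, C h gA gB NA NB ζ P τ' Γ ≤ C h gA gB NA NB ζ P τNE Γ) →
      C h gA gB NA NB ζ p τ 0 ≤ C h gA gB NA NB ζ P τNE Γ := by
  obtain ⟨hp0, hpP⟩ := hp
  obtain ⟨hτ0, hτ1⟩ := hτ
  have h1 : C h gA gB NA NB ζ p τ 0 ≤ C h gA gB NA NB ζ p τ Γ :=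
    C_gamma_le h gA gB NA NB ζ p τ Γ hh hgA hNA hNB hζ hgB' hΓ hp0 hτ0 hτ1 hpth
  constructor
  · refine h1.trans (le_csSup (C_bdd h gA gB NA NB ζ P Γ hh hgA hgB hNA hNB hζ hΓ.le hP.le) ?_)
    exact ⟨p, ⟨hp0, hpP⟩, τ, ⟨hτ0, hτ1⟩, rfl⟩
  · intro τNE hτNE hmax
    have h2 : C h gA gB NA NB ζ p τ Γ ≤ C h gA gB NA NB ζ P τ Γ :=
      C_p_mono h gA gB NA NB ζ p P τ Γ hh hgA hgB hNA hNB hζ hΓ.le hp0 hpP hτ0 hτ1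
    exact h1.trans (h2.trans (hmax τ ⟨hτ0, hτ1⟩))
end
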